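/- arXiv:1503.00225 — 6 statements merged into one kernel-verified Lean document; each statement's English description precedes it below -/
import Mathlib

section
/- For every L > 0 and every λ > 0 there exists a C³ function p : T → ℝ on the triangle T = {(x,y) : 0 ≤ x ≤ L, x ≤ y ≤ L} satisfying p_{xxx} + p_{yyy} + p_x + p_y = λ p in T, p(x,x) = 0 for all x ∈ [0,L], p_x(x,x) = (λ/3)·x for all x ∈ [0,L], and p(0,y) = 0 for all y ∈ [0,L]. -/
/-!
Write `p x y = f (x, y - x)`. In the coordinates `(x, d)` with `d = y - x` the equation reads
`f_xxx - 3 f_xxd + 3 f_xdd + f_x = λ f`, the diagonal is `d = 0`, and the boundary conditions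
become `f (x, 0) = 0`, `f_d (x, 0) = -λ x / 3`, `f (0, d) = 0`. For a double power series
`f = ∑ a j k x^j d^k` the equation is a recursion that determines `a (j+1) (k+2)` from the rows
`k` and `k + 1`, started from the rows `k = 0, 1` prescribed by the diagonal data and a zero
column `j = 0`. The recursion preserves the majorant `λ M^(j+k) / (2^j j! k!)` for `M = λ + 2`, so
`f` is entire and the equation holds by termwise differentiation.
-/

open Nat

noncomputable def doubleSeries (a : ℕ → ℕ → ℝ) (z : ℝ × ℝ) : ℝ :=
  ∑' q : ℕ × ℕ, a q.1 q.2 * z.1 ^ q.1 * z.2 ^ q.2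

def EntireCoeffs (a : ℕ → ℕ → ℝ) : Prop :=
  ∀ R : ℝ, 0 ≤ R → Summable fun q : ℕ × ℕ => |a q.1 q.2| * R ^ (q.1 + q.2)

def derivFstCoeffs (a : ℕ → ℕ → ℝ) (j k : ℕ) : ℝ := (j + 1) * a (j + 1) k

def derivSndCoeffs (a : ℕ → ℕ → ℝ) (j k : ℕ) : ℝ := (k + 1) * a j (k + 1)

theorem natCast_mul_pow_le_two_mul_pow {R : ℝ} (hR : 1 ≤ R) {n m l : ℕ} (h : m ≤ n + l) :
    (n : ℝ) * R ^ m ≤ (2 * R) ^ (n + l) := by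
  have hn : (n : ℝ) ≤ 2 ^ (n + l) :=
    calc (n : ℝ) ≤ 2 ^ n := by exact_mod_cast n.lt_two_pow_self.le
      _ ≤ 2 ^ (n + l) := pow_le_pow_right₀ one_le_two (by omega)
  rw [mul_pow]
  exact mul_le_mul hn (pow_le_pow_right₀ hR h) (by positivity) (by positivity)

section

variable {a b : ℕ → ℕ → ℝ}

namespace EntireCoeffs

theorem add (ha : EntireCoeffs a) (hb : EntireCoeffs b) : EntireCoeffs (a + b) := fun R hR =>
  .of_nonneg_of_le (fun _ => by positivity)
    (fun q => by simpa only [Pi.add_apply, add_mul] using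
      mul_le_mul_of_nonneg_right (abs_add_le _ _) (pow_nonneg hR _))
    ((ha R hR).add (hb R hR))

theorem sub (ha : EntireCoeffs a) (hb : EntireCoeffs b) : EntireCoeffs (a - b) := fun R hR =>
  .of_nonneg_of_le (fun _ => by positivity)
    (fun q => by simpa only [Pi.sub_apply, add_mul] using
      mul_le_mul_of_nonneg_right (abs_sub _ _) (pow_nonneg hR _))
    ((ha R hR).add (hb R hR))

theorem derivFst (ha : EntireCoeffs a) : EntireCoeffs (derivFstCoeffs a) := fun R hR => by
  have hinj : Function.Injective fun q : ℕ × ℕ => (q.1 + 1, q.2) := fun q q' h => by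
    simpa [Prod.ext_iff] using h
  refine .of_nonneg_of_le (fun _ => by positivity) (fun q => ?_)
    ((ha (2 * (R + 1)) (by positivity)).comp_injective hinj)
  calc |derivFstCoeffs a q.1 q.2| * R ^ (q.1 + q.2)
      = |a (q.1 + 1) q.2| * ((q.1 + 1 : ℕ) * R ^ (q.1 + q.2)) := by
        rw [derivFstCoeffs, abs_mul, abs_of_nonneg (by positivity)]; push_cast; ring
    _ ≤ |a (q.1 + 1) q.2| * ((q.1 + 1 : ℕ) * (R + 1) ^ (q.1 + q.2)) := by gcongr; linarith
    _ ≤ |a (q.1 + 1) q.2| * (2 * (R + 1)) ^ (q.1 + 1 + q.2) := by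
        gcongr; exact natCast_mul_pow_le_two_mul_pow (by linarith) (by omega)

theorem derivSnd (ha : EntireCoeffs a) : EntireCoeffs (derivSndCoeffs a) := fun R hR => by
  have hinj : Function.Injective fun q : ℕ × ℕ => (q.1, q.2 + 1) := fun q q' h => by
    simpa [Prod.ext_iff] using h
  refine .of_nonneg_of_le (fun _ => by positivity) (fun q => ?_)
    ((ha (2 * (R + 1)) (by positivity)).comp_injective hinj)
  calc |derivSndCoeffs a q.1 q.2| * R ^ (q.1 + q.2)
      = |a q.1 (q.2 + 1)| * ((q.2 + 1 : ℕ) * R ^ (q.1 + q.2)) := by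
        rw [derivSndCoeffs, abs_mul, abs_of_nonneg (by positivity)]; push_cast; ring
    _ ≤ |a q.1 (q.2 + 1)| * ((q.2 + 1 : ℕ) * (R + 1) ^ (q.1 + q.2)) := by gcongr; linarith
    _ ≤ |a q.1 (q.2 + 1)| * (2 * (R + 1)) ^ (q.1 + (q.2 + 1)) := by
        rw [add_comm q.1 (q.2 + 1)]
        gcongr; exact natCast_mul_pow_le_two_mul_pow (by linarith) (by omega)

theorem summable (ha : EntireCoeffs a) (z : ℝ × ℝ) :
    Summable fun q : ℕ × ℕ => a q.1 q.2 * z.1 ^ q.1 * z.2 ^ q.2 := by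
  set R := max |z.1| |z.2|
  refine .of_norm_bounded (ha R (by positivity)) fun q => ?_
  rw [Real.norm_eq_abs, abs_mul, abs_mul, abs_pow, abs_pow, mul_assoc, pow_add]
  gcongr
  exacts [le_max_left _ _, le_max_right _ _]

theorem of_abs_le (hb : EntireCoeffs b) (h : ∀ j k, |a j k| ≤ b j k) : EntireCoeffs a :=
  fun R hR => .of_nonneg_of_le (fun _ => by positivity)
    (fun q => mul_le_mul_of_nonneg_right ((h q.1 q.2).trans (le_abs_self _)) (pow_nonneg hR _))
    (hb R hR)

end EntireCoeffs

theorem doubleSeries_zero_snd (a : ℕ → ℕ → ℝ) (x : ℝ) :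
    doubleSeries a (x, 0) = ∑' j, a j 0 * x ^ j := by
  refine (Function.Injective.tsum_eq (g := fun j : ℕ => (j, 0))
    (fun j j' h => by simpa using h) ?_).symm.trans ?_
  · rintro ⟨j, _ | k⟩ hq
    exacts [⟨j, rfl⟩, absurd (by simp) hq]
  · simp

theorem doubleSeries_zero_fst (a : ℕ → ℕ → ℝ) (d : ℝ) :
    doubleSeries a (0, d) = ∑' k, a 0 k * d ^ k := by
  refine (Function.Injective.tsum_eq (g := fun k : ℕ => (0, k))
    (fun k k' h => by simpa using h) ?_).symm.trans ?_
  · rintro ⟨_ | j, k⟩ hq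
    exacts [⟨k, rfl⟩, absurd (by simp) hq]
  · simp

theorem doubleSeries_add (ha : EntireCoeffs a) (hb : EntireCoeffs b)
    (z : ℝ × ℝ) : doubleSeries (a + b) z = doubleSeries a z + doubleSeries b z := by
  simp only [doubleSeries, Pi.add_apply, add_mul]
  exact (ha.summable z).tsum_add (hb.summable z)

theorem doubleSeries_sub (ha : EntireCoeffs a) (hb : EntireCoeffs b)
    (z : ℝ × ℝ) : doubleSeries (a - b) z = doubleSeries a z - doubleSeries b z := by
  simp only [doubleSeries, Pi.sub_apply, sub_mul]
  exact (ha.summable z).tsum_sub (hb.summable z)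

theorem doubleSeries_smul (c : ℝ) (a : ℕ → ℕ → ℝ) (z : ℝ × ℝ) :
    doubleSeries (c • a) z = c * doubleSeries a z := by
  simp only [doubleSeries, Pi.smul_apply, smul_eq_mul, mul_assoc, tsum_mul_left]

noncomputable def monomialFDeriv (c : ℝ) (j k : ℕ) (w : ℝ × ℝ) : ℝ × ℝ →L[ℝ] ℝ :=
  (c * (j * w.1 ^ (j - 1)) * w.2 ^ k) • .fst ℝ ℝ ℝ
    + (c * w.1 ^ j * (k * w.2 ^ (k - 1))) • .snd ℝ ℝ ℝ

open ContinuousLinearMap in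
theorem hasFDerivAt_monomial (c : ℝ) (j k : ℕ) (w : ℝ × ℝ) :
    HasFDerivAt (fun w : ℝ × ℝ => c * w.1 ^ j * w.2 ^ k) (monomialFDeriv c j k w) w := by
  have h := (((hasDerivAt_pow j w.1).comp_hasFDerivAt w (hasFDerivAt_fst (𝕜 := ℝ))).mul
    ((hasDerivAt_pow k w.2).comp_hasFDerivAt w (hasFDerivAt_snd (𝕜 := ℝ)))).const_mul c
  simp only [mul_assoc]
  refine h.congr_fderiv ?_
  ext <;> simp only [monomialFDeriv, coe_comp, Function.comp_apply, add_apply, smul_apply,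
    coe_fst', coe_snd', inl_apply, inr_apply, smul_eq_mul] <;> ring

theorem norm_monomialFDeriv_le {c R : ℝ} (hR : 1 ≤ R) (j k : ℕ) {w : ℝ × ℝ} (hw : ‖w‖ ≤ R) :
    ‖monomialFDeriv c j k w‖ ≤ 2 * (|c| * (2 * R) ^ (j + k)) := by
  have h₁ : |w.1| ≤ R := (norm_fst_le w).trans hw
  have h₂ : |w.2| ≤ R := (norm_snd_le w).trans hw
  have hR0 : 0 ≤ R := by linarith
  refine (norm_add_le _ _).trans ?_
  rw [norm_smul, norm_smul, two_mul]
  refine add_le_add ?_ ?_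
  · refine (mul_le_of_le_one_right (norm_nonneg _) (ContinuousLinearMap.norm_fst_le ..)).trans ?_
    rw [Real.norm_eq_abs, abs_mul, abs_mul, abs_mul, abs_pow, abs_pow, Nat.abs_cast, mul_assoc]
    gcongr
    calc (j : ℝ) * |w.1| ^ (j - 1) * |w.2| ^ k ≤ j * R ^ (j - 1) * R ^ k := by gcongr
      _ = j * R ^ (j - 1 + k) := by ring
      _ ≤ (2 * R) ^ (j + k) := natCast_mul_pow_le_two_mul_pow hR (by omega)
  · refine (mul_le_of_le_one_right (norm_nonneg _) (ContinuousLinearMap.norm_snd_le ..)).trans ?_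
    rw [Real.norm_eq_abs, abs_mul, abs_mul, abs_mul, abs_pow, abs_pow, Nat.abs_cast, mul_assoc]
    gcongr
    calc |w.1| ^ j * ((k : ℝ) * |w.2| ^ (k - 1)) ≤ R ^ j * (k * R ^ (k - 1)) := by gcongr
      _ = k * R ^ (k - 1 + j) := by ring
      _ ≤ (2 * R) ^ (j + k) := by
        rw [add_comm j]; exact natCast_mul_pow_le_two_mul_pow hR (by omega)

theorem EntireCoeffs.hasSum_derivFstCoeffs (ha : EntireCoeffs a) (z : ℝ × ℝ) :
    HasSum (fun q : ℕ × ℕ => a q.1 q.2 * (q.1 * z.1 ^ (q.1 - 1)) * z.2 ^ q.2)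
      (doubleSeries (derivFstCoeffs a) z) := by
  refine (Function.Injective.hasSum_iff (g := fun q : ℕ × ℕ => (q.1 + 1, q.2))
    (fun q q' hq => by simpa [Prod.ext_iff] using hq) ?_).mp ?_
  · rintro ⟨_ | j, k⟩ hq
    exacts [by simp, absurd ⟨(j, k), rfl⟩ hq]
  · rw [doubleSeries]
    convert (ha.derivFst.summable z).hasSum using 1
    ext q
    simp only [Function.comp_apply, derivFstCoeffs, Nat.add_sub_cancel]
    push_cast
    ring

theorem EntireCoeffs.hasSum_derivSndCoeffs (ha : EntireCoeffs a) (z : ℝ × ℝ) :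
    HasSum (fun q : ℕ × ℕ => a q.1 q.2 * z.1 ^ q.1 * (q.2 * z.2 ^ (q.2 - 1)))
      (doubleSeries (derivSndCoeffs a) z) := by
  refine (Function.Injective.hasSum_iff (g := fun q : ℕ × ℕ => (q.1, q.2 + 1))
    (fun q q' hq => by simpa [Prod.ext_iff] using hq) ?_).mp ?_
  · rintro ⟨j, _ | k⟩ hq
    exacts [by simp, absurd ⟨(j, k), rfl⟩ hq]
  · rw [doubleSeries]
    convert (ha.derivSnd.summable z).hasSum using 1
    ext q
    simp only [Function.comp_apply, derivSndCoeffs, Nat.add_sub_cancel]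
    push_cast
    ring

open ContinuousLinearMap in
theorem hasFDerivAt_doubleSeries (ha : EntireCoeffs a) (z : ℝ × ℝ) :
    HasFDerivAt (doubleSeries a)
      (doubleSeries (derivFstCoeffs a) z • fst ℝ ℝ ℝ
        + doubleSeries (derivSndCoeffs a) z • snd ℝ ℝ ℝ) z := by
  set R := ‖z‖ + 1
  have hR : 1 ≤ R := by simp [R]
  have hz : z ∈ Metric.ball (0 : ℝ × ℝ) R := by simp [R]
  have hsum := hasFDerivAt_tsum_of_isPreconnected
    (((ha (2 * R) (by positivity)).mul_left 2)) Metric.isOpen_ball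
    (convex_ball _ _).isPreconnected (fun q w _ => hasFDerivAt_monomial (a q.1 q.2) q.1 q.2 w)
    (fun q w hw => norm_monomialFDeriv_le hR q.1 q.2 (by simpa using (Metric.mem_ball.mp hw).le))
    hz (ha.summable z) hz
  simp only [monomialFDeriv] at hsum
  rwa [(((ha.hasSum_derivFstCoeffs z).smul_const _).add
    ((ha.hasSum_derivSndCoeffs z).smul_const _)).tsum_eq] at hsum

theorem EntireCoeffs.contDiff_doubleSeries (ha : EntireCoeffs a) (n : ℕ) :
    ContDiff ℝ n (doubleSeries a) := by
  induction n generalizing a with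
  | zero =>
    exact contDiff_zero.mpr (continuous_iff_continuousAt.mpr fun z =>
      (hasFDerivAt_doubleSeries ha z).continuousAt)
  | succ n ih =>
    rw [Nat.cast_succ, contDiff_succ_iff_fderiv]
    refine ⟨fun z => (hasFDerivAt_doubleSeries ha z).differentiableAt, by simp, ?_⟩
    rw [funext fun z => (hasFDerivAt_doubleSeries ha z).fderiv]
    exact ((ih ha.derivFst).smul contDiff_const).add ((ih ha.derivSnd).smul contDiff_const)

/-- The coefficients of `∂ₓ` of `(x, y) ↦ doubleSeries a (x, y - x)`. -/
def shearDerivCoeffs (a : ℕ → ℕ → ℝ) : ℕ → ℕ → ℝ := derivFstCoeffs a - derivSndCoeffs a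

theorem EntireCoeffs.shearDeriv (ha : EntireCoeffs a) :
    EntireCoeffs (shearDerivCoeffs a) :=
  ha.derivFst.sub ha.derivSnd

theorem entireCoeffs_iterate {f : (ℕ → ℕ → ℝ) → ℕ → ℕ → ℝ}
    (hf : ∀ {b}, EntireCoeffs b → EntireCoeffs (f b)) (n : ℕ) (ha : EntireCoeffs a) :
    EntireCoeffs (f^[n] a) := by
  induction n with
  | zero => exact ha
  | succ n ih => rw [Function.iterate_succ_apply']; exact hf ih

theorem hasDerivAt_doubleSeries_shear_fst (ha : EntireCoeffs a) (x y : ℝ) :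
    HasDerivAt (fun s => doubleSeries a (s, y - s))
      (doubleSeries (shearDerivCoeffs a) (x, y - x)) x := by
  have h := (hasFDerivAt_doubleSeries ha (x, y - x)).comp_hasDerivAt x
    ((hasDerivAt_id x).prodMk ((hasDerivAt_id x).const_sub y))
  rw [shearDerivCoeffs, doubleSeries_sub ha.derivFst ha.derivSnd]
  simpa [Function.comp_def, sub_eq_add_neg] using h

theorem hasDerivAt_doubleSeries_shear_snd (ha : EntireCoeffs a) (x y : ℝ) :
    HasDerivAt (fun t => doubleSeries a (x, t - x))
      (doubleSeries (derivSndCoeffs a) (x, y - x)) y := by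
  have h := (hasFDerivAt_doubleSeries ha (x, y - x)).comp_hasDerivAt y
    ((hasDerivAt_const y x).prodMk ((hasDerivAt_id y).sub_const x))
  simpa [Function.comp_def] using h

theorem iteratedDeriv_doubleSeries_shear_fst (n : ℕ) (ha : EntireCoeffs a) (y : ℝ) :
    iteratedDeriv n (fun s => doubleSeries a (s, y - s))
      = fun x => doubleSeries (shearDerivCoeffs^[n] a) (x, y - x) := by
  induction n generalizing a with
  | zero => rfl
  | succ n ih =>
    rw [iteratedDeriv_succ', funext fun x => (hasDerivAt_doubleSeries_shear_fst ha x y).deriv,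
      ih ha.shearDeriv, Function.iterate_succ_apply]

theorem iteratedDeriv_doubleSeries_shear_snd (n : ℕ) (ha : EntireCoeffs a) (x : ℝ) :
    iteratedDeriv n (fun t => doubleSeries a (x, t - x))
      = fun y => doubleSeries (derivSndCoeffs^[n] a) (x, y - x) := by
  induction n generalizing a with
  | zero => rfl
  | succ n ih =>
    rw [iteratedDeriv_succ', funext fun y => (hasDerivAt_doubleSeries_shear_snd ha x y).deriv,
      ih ha.derivSnd, Function.iterate_succ_apply]

theorem iteratedDeriv_three_add_deriv_doubleSeries_shear (ha : EntireCoeffs a) (x y : ℝ) :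
    iteratedDeriv 3 (fun s => doubleSeries a (s, y - s)) x
        + iteratedDeriv 3 (fun r => doubleSeries a (x, r - x)) y
        + deriv (fun s => doubleSeries a (s, y - s)) x
        + deriv (fun r => doubleSeries a (x, r - x)) y
      = doubleSeries (shearDerivCoeffs^[3] a + derivSndCoeffs^[3] a
          + shearDerivCoeffs a + derivSndCoeffs a) (x, y - x) := by
  have h₁ := entireCoeffs_iterate EntireCoeffs.shearDeriv 3 ha
  have h₂ := entireCoeffs_iterate EntireCoeffs.derivSnd 3 ha
  rw [iteratedDeriv_doubleSeries_shear_fst 3 ha, iteratedDeriv_doubleSeries_shear_snd 3 ha,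
    (hasDerivAt_doubleSeries_shear_fst ha x y).deriv,
    (hasDerivAt_doubleSeries_shear_snd ha x y).deriv,
    doubleSeries_add ((h₁.add h₂).add ha.shearDeriv) ha.derivSnd,
    doubleSeries_add (h₁.add h₂) ha.shearDeriv, doubleSeries_add h₁ h₂]

end

/-- Coefficients of `f (x, d) = p (x, x + d)`: the recursion solves the coefficient form
`kernelCoeff_rec` of `f_xxx - 3 f_xxd + 3 f_xdd + f_x = λ f` for the `f_xdd` term. -/
noncomputable def kernelCoeff (lam : ℝ) : ℕ → ℕ → ℝ
  | _, 0 => 0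
  | j, 1 => if j = 1 then -(lam / 3) else 0
  | 0, _ + 2 => 0
  | j + 1, k + 2 =>
    (lam * kernelCoeff lam j k - (j + 1) * (j + 2) * (j + 3) * kernelCoeff lam (j + 3) k
      - (j + 1) * kernelCoeff lam (j + 1) k
      + 3 * (j + 1) * (j + 2) * (k + 1) * kernelCoeff lam (j + 2) (k + 1))
      / (3 * (j + 1) * (k + 1) * (k + 2))

theorem kernelCoeff_zero_right (lam : ℝ) (j : ℕ) : kernelCoeff lam j 0 = 0 := by
  simp [kernelCoeff]

theorem kernelCoeff_zero_left (lam : ℝ) (k : ℕ) : kernelCoeff lam 0 k = 0 := by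
  rcases k with _ | _ | k <;> simp [kernelCoeff]

theorem kernelCoeff_rec (lam : ℝ) (j k : ℕ) :
    (j + 1) * (j + 2) * (j + 3) * kernelCoeff lam (j + 3) k
      - 3 * (j + 1) * (j + 2) * (k + 1) * kernelCoeff lam (j + 2) (k + 1)
      + 3 * (j + 1) * (k + 1) * (k + 2) * kernelCoeff lam (j + 1) (k + 2)
      + (j + 1) * kernelCoeff lam (j + 1) k = lam * kernelCoeff lam j k := by
  rw [kernelCoeff]
  field_simp
  ring

noncomputable def kernelMajorant (lam M : ℝ) (j k : ℕ) : ℝ :=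
  lam * M ^ (j + k) / (2 ^ j * j ! * k !)

theorem ascFactorial_mul_kernelMajorant (lam M : ℝ) (j k m n : ℕ) :
    (j + 1).ascFactorial m * (k + 1).ascFactorial n * kernelMajorant lam M (j + m) (k + n)
      = M ^ (m + n) / 2 ^ m * kernelMajorant lam M j k := by
  simp only [kernelMajorant, ← factorial_mul_ascFactorial j m, ← factorial_mul_ascFactorial k n]
  push_cast
  have : ((j + 1).ascFactorial m : ℝ) ≠ 0 := by positivity
  have : ((k + 1).ascFactorial n : ℝ) ≠ 0 := by positivity
  field_simp
  ring

theorem kernelMajorant_nonneg {lam M : ℝ} (hlam : 0 ≤ lam) (hM : 0 ≤ M) (j k : ℕ) :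
    0 ≤ kernelMajorant lam M j k := by
  unfold kernelMajorant; positivity

theorem abs_kernelCoeff_le {lam : ℝ} (hlam : 0 ≤ lam) :
    ∀ j k, |kernelCoeff lam j k| ≤ kernelMajorant lam (lam + 2) j k
  | j, 0 => by
    simpa [kernelCoeff_zero_right] using kernelMajorant_nonneg hlam (by linarith) j 0
  | j, 1 => by
    by_cases hj : j = 1
    · subst hj
      have : 0 ≤ lam * (lam * (lam + 4)) := by positivity
      simp only [kernelCoeff, if_true, abs_neg, kernelMajorant]
      rw [abs_of_nonneg (by positivity)]
      norm_num
      nlinarith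
    · simpa [kernelCoeff, hj] using kernelMajorant_nonneg hlam (by linarith) j 1
  | 0, k + 2 => by
    simpa [kernelCoeff_zero_left] using kernelMajorant_nonneg hlam (by linarith) 0 (k + 2)
  | j + 1, k + 2 => by
    have scale : ∀ {c a b : ℝ}, 0 ≤ c → |a| ≤ b → -(c * b) ≤ c * a ∧ c * a ≤ c * b :=
      fun hc h => abs_le.mp (by rw [abs_mul, abs_of_nonneg hc]; gcongr)
    have h₀ := scale hlam (abs_kernelCoeff_le hlam j k)
    have h₃ := scale (by positivity : (0:ℝ) ≤ (j + 1) * (j + 2) * (j + 3))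
      (abs_kernelCoeff_le hlam (j + 3) k)
    have h₁ := scale (by positivity : (0:ℝ) ≤ j + 1) (abs_kernelCoeff_le hlam (j + 1) k)
    have h₂ := scale (by positivity : (0:ℝ) ≤ 3 * (j + 1) * (j + 2) * (k + 1))
      (abs_kernelCoeff_le hlam (j + 2) (k + 1))
    have e₃ := ascFactorial_mul_kernelMajorant lam (lam + 2) j k 3 0
    have e₁ := ascFactorial_mul_kernelMajorant lam (lam + 2) j k 1 0
    have e₂ := ascFactorial_mul_kernelMajorant lam (lam + 2) j k 2 1
    have e := ascFactorial_mul_kernelMajorant lam (lam + 2) j k 1 2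
    simp only [ascFactorial_succ, ascFactorial_zero, add_zero] at e₃ e₁ e₂ e
    push_cast at e₃ e₁ e₂ e
    have hrec := kernelCoeff_rec lam j k
    -- With `M = λ + 2`, the recursion bounds `D * |kernelCoeff lam (j+1) (k+2)|` by
    -- `(λ + M³/8 + M/2 + 3M³/4) * kernelMajorant lam M j k`, against `3M³/2` for its majorant.
    have hM : lam + (lam + 2) / 2 ≤ 5 * (lam + 2) ^ 3 / 8 := by
      nlinarith [(by positivity : 0 ≤ (lam + 2) * lam * (lam + 4))]
    have hslack := mul_nonneg (sub_nonneg.mpr hM)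
      (kernelMajorant_nonneg hlam (by positivity : (0:ℝ) ≤ lam + 2) j k)
    have hD : (0:ℝ) < 3 * (j + 1) * (k + 1) * (k + 2) := by positivity
    refine le_of_mul_le_mul_left ?_ hD
    have key : |3 * (j + 1) * (k + 1) * (k + 2) * kernelCoeff lam (j + 1) (k + 2)|
        ≤ 3 * (j + 1) * (k + 1) * (k + 2) * kernelMajorant lam (lam + 2) (j + 1) (k + 2) :=
      abs_le.mpr ⟨by linarith, by linarith⟩
    rwa [abs_mul, abs_of_pos hD] at key

theorem entireCoeffs_kernelMajorant {lam M : ℝ} (hlam : 0 ≤ lam) (hM : 0 ≤ M) :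
    EntireCoeffs (kernelMajorant lam M) := fun R hR => by
  refine (((Real.summable_pow_div_factorial (M * R / 2)).mul_of_nonneg
    (Real.summable_pow_div_factorial (M * R)) (fun _ => by positivity)
    (fun _ => by positivity)).mul_left lam).congr fun q => ?_
  rw [abs_of_nonneg (kernelMajorant_nonneg hlam hM _ _), kernelMajorant, div_pow, mul_pow,
    mul_pow, pow_add, pow_add]
  field_simp

theorem entireCoeffs_kernelCoeff {lam : ℝ} (hlam : 0 ≤ lam) : EntireCoeffs (kernelCoeff lam) :=
  (entireCoeffs_kernelMajorant hlam (by linarith)).of_abs_le (abs_kernelCoeff_le hlam)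

theorem kernelCoeff_pde (lam : ℝ) :
    shearDerivCoeffs^[3] (kernelCoeff lam) + derivSndCoeffs^[3] (kernelCoeff lam)
      + shearDerivCoeffs (kernelCoeff lam) + derivSndCoeffs (kernelCoeff lam)
      = lam • kernelCoeff lam := by
  ext j k
  simp only [Function.iterate_succ, Function.iterate_zero, Function.comp_apply, id, Pi.add_apply,
    Pi.sub_apply, Pi.smul_apply, smul_eq_mul, shearDerivCoeffs, derivFstCoeffs, derivSndCoeffs]
  push_cast
  linear_combination kernelCoeff_rec lam j k

theorem shearDerivCoeffs_kernelCoeff_zero_right (lam : ℝ) (j : ℕ) :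
    shearDerivCoeffs (kernelCoeff lam) j 0 = if j = 1 then lam / 3 else 0 := by
  simp only [shearDerivCoeffs, derivFstCoeffs, derivSndCoeffs, Pi.sub_apply, kernelCoeff]
  split_ifs <;> simp

theorem exists_observer_kernel_general (L lam : ℝ) (hlam : 0 < lam) :
    ∃ p : ℝ → ℝ → ℝ,
      ContDiffOn ℝ 3 (Function.uncurry p)
        {q : ℝ × ℝ | 0 ≤ q.1 ∧ q.1 ≤ L ∧ q.1 ≤ q.2 ∧ q.2 ≤ L} ∧
      (∀ x y : ℝ, (x, y) ∈ {q : ℝ × ℝ | 0 ≤ q.1 ∧ q.1 ≤ L ∧ q.1 ≤ q.2 ∧ q.2 ≤ L} →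
        iteratedDeriv 3 (fun s => p s y) x + iteratedDeriv 3 (fun r => p x r) y
          + deriv (fun s => p s y) x + deriv (fun r => p x r) y = lam * p x y) ∧
      (∀ x ∈ Set.Icc (0:ℝ) L, p x x = 0) ∧
      (∀ x ∈ Set.Icc (0:ℝ) L, deriv (fun s => p s x) x = lam / 3 * x) ∧
      (∀ y ∈ Set.Icc (0:ℝ) L, p 0 y = 0) := by
  have ha := entireCoeffs_kernelCoeff hlam.le
  refine ⟨fun x y => doubleSeries (kernelCoeff lam) (x, y - x), ?_, fun x y _ => ?_,
    fun x _ => ?_, fun x _ => ?_, fun y _ => ?_⟩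
  · exact ((ha.contDiff_doubleSeries 3).comp
      (contDiff_fst.prodMk (contDiff_snd.sub contDiff_fst))).contDiffOn
  · rw [iteratedDeriv_three_add_deriv_doubleSeries_shear ha, kernelCoeff_pde, doubleSeries_smul]
  · simp [doubleSeries_zero_snd, kernelCoeff_zero_right]
  · rw [(hasDerivAt_doubleSeries_shear_fst ha x x).deriv, sub_self, doubleSeries_zero_snd,
      tsum_eq_single 1 fun j hj => by simp [shearDerivCoeffs_kernelCoeff_zero_right, hj]]
    simp [shearDerivCoeffs_kernelCoeff_zero_right]
  · simp [doubleSeries_zero_fst, kernelCoeff_zero_left]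

/-- Existence of the observer backstepping kernel: for every `L > 0` and `λ > 0` there is a
function `p`, of class `C³` on the triangle `T = {(x,y) : 0 ≤ x ≤ L, x ≤ y ≤ L}`, satisfying
`p_xxx + p_yyy + p_x + p_y = λ p` in `T`, `p(x,x) = 0`, `p_x(x,x) = (λ/3) x` for
`x ∈ [0,L]`, and `p(0,y) = 0` for `y ∈ [0,L]`. -/
theorem exists_observer_kernel (L lam : ℝ) (hL : 0 < L) (hlam : 0 < lam) :
    ∃ p : ℝ → ℝ → ℝ,
      ContDiffOn ℝ 3 (Function.uncurry p)
        {q : ℝ × ℝ | 0 ≤ q.1 ∧ q.1 ≤ L ∧ q.1 ≤ q.2 ∧ q.2 ≤ L} ∧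
      (∀ x y : ℝ, (x, y) ∈ {q : ℝ × ℝ | 0 ≤ q.1 ∧ q.1 ≤ L ∧ q.1 ≤ q.2 ∧ q.2 ≤ L} →
        iteratedDeriv 3 (fun s => p s y) x + iteratedDeriv 3 (fun r => p x r) y
          + deriv (fun s => p s y) x + deriv (fun r => p x r) y = lam * p x y) ∧
      (∀ x ∈ Set.Icc (0:ℝ) L, p x x = 0) ∧
      (∀ x ∈ Set.Icc (0:ℝ) L, deriv (fun s => p s x) x = lam / 3 * x) ∧
      (∀ y ∈ Set.Icc (0:ℝ) L, p 0 y = 0) :=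
  exists_observer_kernel_general L lam hlam
end

section
/- Let L > 0 and λ > 0. Let w̃ : ℝ × ℝ → ℝ be a smooth (C^∞) function satisfying, for all t ≥ 0 and x ∈ [0,L], ∂_t w̃ + ∂_x w̃ + ∂_x^3 w̃ + λ w̃ = 0, with w̃(t,0) = w̃(t,L) = 0 and ∂_x w̃(t,L) = 0 for all t ≥ 0. Then for every t ≥ 0, (∂_x² w̃(t,L))² ≤ (1/L + L) ∫₀ᴸ (∂_x² w̃(t,x))² dx + (2λ + 1/L) ∫₀ᴸ (∂_x w̃(t,x))² dx + (1/L) ∫₀ᴸ (∂_t w̃(t,x))² dx. -/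
open MeasureTheory

theorem trace_key (L lam : ℝ) (hL : 0 < L) (hlam : 0 < lam)
    (w F : ℝ → ℝ) (hw : ContDiff ℝ (⊤ : ℕ∞) w) (hF : Continuous F)
    (hpde : ∀ x ∈ Set.Icc (0:ℝ) L, F x + deriv w x + iteratedDeriv 3 w x + lam * w x = 0)
    (h0 : w 0 = 0) (hwL : w L = 0) (hxL : deriv w L = 0) :
    (iteratedDeriv 2 w L)^2 ≤ (1/L + L) * (∫ x in (0:ℝ)..L, (iteratedDeriv 2 w x)^2)
      + (2*lam + 1/L) * (∫ x in (0:ℝ)..L, (deriv w x)^2)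
      + (1/L) * (∫ x in (0:ℝ)..L, (F x)^2) := by
  set w1 := deriv w with hw1def
  set w2 := deriv w1 with hw2def
  set w3 := deriv w2 with hw3def
  have hw' : ContDiff ℝ (⊤ : ℕ∞) w := hw.of_le (by simp)
  have hw1 : ContDiff ℝ (⊤ : ℕ∞) w1 := (contDiff_infty_iff_deriv (𝕜 := ℝ).mp hw').2
  have hw2 : ContDiff ℝ (⊤ : ℕ∞) w2 := (contDiff_infty_iff_deriv (𝕜 := ℝ).mp hw1).2
  have hw3 : ContDiff ℝ (⊤ : ℕ∞) w3 := (contDiff_infty_iff_deriv (𝕜 := ℝ).mp hw2).2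
  have hi2 : iteratedDeriv 2 w = w2 := by
    simp [iteratedDeriv_succ, iteratedDeriv_zero, hw1def, hw2def]
  have hi3 : iteratedDeriv 3 w = w3 := by
    simp [iteratedDeriv_succ, iteratedDeriv_zero, hw1def, hw2def, hw3def]
  have hdw : ∀ x, HasDerivAt w (w1 x) x := fun x => (hw'.differentiable (by simp) x).hasDerivAt
  have hdw1 : ∀ x, HasDerivAt w1 (w2 x) x := fun x => (hw1.differentiable (by simp) x).hasDerivAt
  have hdw2 : ∀ x, HasDerivAt w2 (w3 x) x := fun x => (hw2.differentiable (by simp) x).hasDerivAt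
  have cw := hw'.continuous
  have cw1 := hw1.continuous
  have cw2 := hw2.continuous
  have cw3 := hw3.continuous
  -- D is the derivative of H after substituting the PDE
  set D : ℝ → ℝ := fun x => (w2 x)^2 - 2*x*(F x)*(w2 x) + (w1 x)^2 + 2*lam*x*(w1 x)^2 with hD
  set H : ℝ → ℝ := fun x => x*(w2 x)^2 + x*(w1 x)^2 + 2*lam*(x * w x * w1 x) - lam*(w x)^2 with hH
  have huIcc : Set.uIcc (0:ℝ) L = Set.Icc 0 L := Set.uIcc_of_le hL.le
  have hder : ∀ x ∈ Set.uIcc (0:ℝ) L, HasDerivAt H (D x) x := by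
    intro x hx
    rw [huIcc] at hx
    have hpx := hpde x hx
    rw [hi3] at hpx
    have h3 : w3 x = -(F x + w1 x + lam * w x) := by rw [hw1def]; linarith
    have d1 : HasDerivAt (fun y => y * (w2 y)^2)
        (1 * (w2 x)^2 + x * (2 * w2 x ^ 1 * w3 x)) x :=
      (hasDerivAt_id x).mul ((hdw2 x).pow 2)
    have d2 : HasDerivAt (fun y => y * (w1 y)^2)
        (1 * (w1 x)^2 + x * (2 * w1 x ^ 1 * w2 x)) x :=
      (hasDerivAt_id x).mul ((hdw1 x).pow 2)
    have d3 : HasDerivAt (fun y => y * w y * w1 y)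
        ((1 * w x + x * w1 x) * w1 x + x * w x * w2 x) x :=
      (((hasDerivAt_id x).mul (hdw x)).mul (hdw1 x))
    have d4 : HasDerivAt (fun y => (w y)^2) (2 * w x ^ 1 * w1 x) x := (hdw x).pow 2
    have := ((d1.add d2).add ((d3.const_mul (2*lam)))).sub (d4.const_mul lam)
    refine this.congr_deriv ?_
    simp only [hD, h3]; ring
  have hDcont : Continuous D := by
    simp only [hD]; fun_prop
  have hint : ∫ x in (0:ℝ)..L, D x = L * (w2 L)^2 := by
    have := intervalIntegral.integral_eq_sub_of_hasDerivAt hder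
      (hDcont.intervalIntegrable 0 L)
    rw [this]
    simp [hH, h0, hwL]
    rw [← hw1def] at *
    simp [hxL]
  set E : ℝ → ℝ := fun x => (1 + L^2)*(w2 x)^2 + ((1 + 2*lam*L)*(w1 x)^2 + (F x)^2) with hE
  have hEcont : Continuous E := by simp only [hE]; fun_prop
  have hmono : ∫ x in (0:ℝ)..L, D x ≤ ∫ x in (0:ℝ)..L, E x := by
    apply intervalIntegral.integral_mono_on hL.le (hDcont.intervalIntegrable 0 L)
      (hEcont.intervalIntegrable 0 L)
    intro x hx
    obtain ⟨hx0, hxL'⟩ := hx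
    simp only [hD, hE]
    have e1 : -(2*x*(F x)*(w2 x)) ≤ x^2*(w2 x)^2 + (F x)^2 := by
      nlinarith [sq_nonneg (x * w2 x + F x)]
    have e2 : x^2*(w2 x)^2 ≤ L^2*(w2 x)^2 :=
      mul_le_mul_of_nonneg_right (by nlinarith) (sq_nonneg _)
    have e3 : 2*lam*x*(w1 x)^2 ≤ 2*lam*L*(w1 x)^2 :=
      mul_le_mul_of_nonneg_right (by nlinarith) (sq_nonneg _)
    nlinarith [e1, e2, e3]
  have hEsplit : ∫ x in (0:ℝ)..L, E x
      = (1 + L^2) * (∫ x in (0:ℝ)..L, (w2 x)^2)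
        + ((1 + 2*lam*L) * (∫ x in (0:ℝ)..L, (w1 x)^2) + ∫ x in (0:ℝ)..L, (F x)^2) := by
    rw [hE]
    rw [intervalIntegral.integral_add ((by fun_prop : Continuous fun x => (1 + L^2)*(w2 x)^2).intervalIntegrable 0 L)
      ((by fun_prop : Continuous fun x => (1 + 2*lam*L)*(w1 x)^2 + (F x)^2).intervalIntegrable 0 L)]
    rw [intervalIntegral.integral_add ((by fun_prop : Continuous fun x => (1 + 2*lam*L)*(w1 x)^2).intervalIntegrable 0 L)
      ((by fun_prop : Continuous fun x => (F x)^2).intervalIntegrable 0 L)]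
    rw [intervalIntegral.integral_const_mul, intervalIntegral.integral_const_mul]
  have key : L * (w2 L)^2 ≤ (1 + L^2) * (∫ x in (0:ℝ)..L, (w2 x)^2)
        + ((1 + 2*lam*L) * (∫ x in (0:ℝ)..L, (w1 x)^2) + ∫ x in (0:ℝ)..L, (F x)^2) := by
    rw [← hint, ← hEsplit]; exact hmono
  have hdiv : (0:ℝ) ≤ 1/L := by positivity
  calc (iteratedDeriv 2 w L)^2 = 1/L * (L * w2 L ^ 2) := by rw [hi2]; field_simp
    _ ≤ 1/L * ((1 + L^2) * (∫ x in (0:ℝ)..L, (w2 x)^2)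
        + ((1 + 2*lam*L) * (∫ x in (0:ℝ)..L, (w1 x)^2) + ∫ x in (0:ℝ)..L, (F x)^2)) :=
      mul_le_mul_of_nonneg_left key hdiv
    _ = _ := by rw [hi2]; field_simp; ring

/-- Trace estimate for the target system: for a solution of
`w̃_t + w̃_x + w̃_xxx + λ w̃ = 0` on `[0,L]` with `w̃(t,0) = w̃(t,L) = w̃_x(t,L) = 0`,
`(w̃_xx(t,L))² ≤ (1/L + L) ∫₀ᴸ w̃_xx² + (2λ + 1/L) ∫₀ᴸ w̃_x² + (1/L) ∫₀ᴸ w̃_t²`. -/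
theorem target_system_trace_estimate
    (L lam : ℝ) (hL : 0 < L) (hlam : 0 < lam)
    (wt : ℝ → ℝ → ℝ) (hwt : ContDiff ℝ (⊤ : ℕ∞) (Function.uncurry wt))
    (hpde : ∀ t ≥ (0:ℝ), ∀ x ∈ Set.Icc (0:ℝ) L,
      deriv (fun s => wt s x) t + deriv (fun y => wt t y) x
        + iteratedDeriv 3 (fun y => wt t y) x + lam * wt t x = 0)
    (hbc0 : ∀ t ≥ (0:ℝ), wt t 0 = 0)
    (hbcL : ∀ t ≥ (0:ℝ), wt t L = 0)
    (hbcxL : ∀ t ≥ (0:ℝ), deriv (fun y => wt t y) L = 0) :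
    ∀ t ≥ (0:ℝ),
      (iteratedDeriv 2 (fun y => wt t y) L) ^ 2
        ≤ (1 / L + L) * (∫ x in (0:ℝ)..L, (iteratedDeriv 2 (fun y => wt t y) x) ^ 2)
          + (2 * lam + 1 / L) * (∫ x in (0:ℝ)..L, (deriv (fun y => wt t y) x) ^ 2)
          + (1 / L) * (∫ x in (0:ℝ)..L, (deriv (fun s => wt s x) t) ^ 2) := by
  intro t ht
  have hw : ContDiff ℝ (⊤ : ℕ∞) (fun y => wt t y) := by
    have : (fun y => wt t y) = Function.uncurry wt ∘ (fun y => (t, y)) := rfl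
    rw [this]
    exact hwt.comp (contDiff_const.prodMk contDiff_id)
  have hFeq : ∀ x, deriv (fun s => wt s x) t
      = fderiv ℝ (Function.uncurry wt) (t, x) (1, 0) := by
    intro x
    have h1 : HasFDerivAt (Function.uncurry wt) (fderiv ℝ (Function.uncurry wt) (t, x)) (t, x) :=
      (hwt.differentiable (by simp) (t, x)).hasFDerivAt
    have h2 : HasDerivAt (fun s : ℝ => (s, x)) ((1:ℝ), (0:ℝ)) t :=
      (hasDerivAt_id t).prodMk (hasDerivAt_const t x)
    have h3 : HasDerivAt (fun s => wt s x) (fderiv ℝ (Function.uncurry wt) (t, x) (1, 0)) t :=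
      by have := h1.comp_hasDerivAt (x := t) h2; exact this
    exact h3.deriv
  have hF : Continuous (fun x => deriv (fun s => wt s x) t) := by
    have hc : Continuous (fderiv ℝ (Function.uncurry wt)) := hwt.continuous_fderiv (by simp)
    have : Continuous (fun x : ℝ => fderiv ℝ (Function.uncurry wt) (t, x) (1, 0)) :=
      (hc.comp (Continuous.prodMk_right t)).clm_apply continuous_const
    simpa only [← hFeq] using this
  exact trace_key L lam hL hlam (fun y => wt t y) (fun x => deriv (fun s => wt s x) t)
    hw hF (fun x hx => hpde t ht x hx) (hbc0 t ht) (hbcL t ht) (hbcxL t ht)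
end

section
/- Let L > 0 and λ > 0. There exist constants a > 0 and b > 0, depending only on L and λ, such that for every smooth (C^∞) function w̃ : ℝ × ℝ → ℝ satisfying, for all t ≥ 0 and x ∈ [0,L], ∂_t w̃ + ∂_x w̃ + ∂_x^3 w̃ + λ w̃ = 0, with w̃(t,0) = w̃(t,L) = 0 and ∂_x w̃(t,L) = 0 for all t ≥ 0, and for every t ≥ 0, one has (∂_x² w̃(t,L))² ≤ a ∫₀ᴸ w̃(t,x)² dx + b ∫₀ᴸ (∂_t w̃(t,x))² dx. -/
open MeasureTheory
open scoped ContDiff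

lemma my_hasDerivAt_iteratedDeriv {u : ℝ → ℝ} (hu : ContDiff ℝ (⊤ : ℕ∞) u) (n : ℕ) (x : ℝ) :
    HasDerivAt (iteratedDeriv n u) (iteratedDeriv (n+1) u x) x := by
  have h : ContDiff ℝ ∞ (iteratedDeriv n u) := by
    rw [iteratedDeriv_eq_iterate]; exact (hu.of_le (by simp)).iterate_deriv n
  have h2 := (h.differentiable (by simp) x).hasDerivAt
  rwa [iteratedDeriv_succ]

lemma my_contdiff_iteratedDeriv {u : ℝ → ℝ} (hu : ContDiff ℝ (⊤ : ℕ∞) u) (n : ℕ) :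
    Continuous (iteratedDeriv n u) := by
  rw [iteratedDeriv_eq_iterate]; exact ((hu.of_le (by simp)).iterate_deriv n).continuous

lemma my_cs {L : ℝ} (hL : 0 ≤ L) {g h : ℝ → ℝ} (hg : Continuous g) (hh : Continuous h) :
    (∫ x in (0:ℝ)..L, g x * h x)^2
      ≤ (∫ x in (0:ℝ)..L, (g x)^2) * (∫ x in (0:ℝ)..L, (h x)^2) := by
  have i1 : IntervalIntegrable (fun x => (g x)^2) volume 0 L :=
    (hg.pow 2).intervalIntegrable _ _
  have i2 : IntervalIntegrable (fun x => g x * h x) volume 0 L :=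
    (hg.mul hh).intervalIntegrable _ _
  have i3 : IntervalIntegrable (fun x => (h x)^2) volume 0 L :=
    (hh.pow 2).intervalIntegrable _ _
  set Av := ∫ x in (0:ℝ)..L, (g x)^2 with hAvdef
  set Bv := ∫ x in (0:ℝ)..L, g x * h x with hBvdef
  set Cv := ∫ x in (0:ℝ)..L, (h x)^2 with hCvdef
  have key : ∀ c : ℝ, 0 ≤ Av - 2*c*Bv + c^2*Cv := by
    intro c
    have hnn : 0 ≤ ∫ x in (0:ℝ)..L, (g x - c * h x)^2 :=
      intervalIntegral.integral_nonneg hL (fun x _ => sq_nonneg _)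
    have hexp : (∫ x in (0:ℝ)..L, (g x - c*h x)^2) = Av - 2*c*Bv + c^2*Cv := by
      have h1 : ∀ x:ℝ, (g x - c*h x)^2
          = ((g x)^2 - (2*c)*(g x * h x)) + c^2*(h x)^2 := fun x => by ring
      simp_rw [h1]
      rw [intervalIntegral.integral_add (i1.sub (i2.const_mul (2*c))) (i3.const_mul (c^2)),
        intervalIntegral.integral_sub i1 (i2.const_mul (2*c)),
        intervalIntegral.integral_const_mul, intervalIntegral.integral_const_mul]
    linarith [hexp ▸ hnn]
  have hA : 0 ≤ Av := intervalIntegral.integral_nonneg hL (fun x _ => sq_nonneg _)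
  have hC : 0 ≤ Cv := intervalIntegral.integral_nonneg hL (fun x _ => sq_nonneg _)
  rcases eq_or_lt_of_le hC with hC0 | hCpos
  · have hB : Bv = 0 := by
      by_contra hB
      have h' := key ((Av+1)/(2*Bv))
      rw [← hC0] at h'
      have h2 : 2*((Av+1)/(2*Bv))*Bv = Av + 1 := by field_simp
      nlinarith
    rw [hB, ← hC0]; norm_num
  · have h' := key (Bv/Cv)
    have h2 : Av - 2*(Bv/Cv)*Bv + (Bv/Cv)^2*Cv = Av - Bv^2/Cv := by
      field_simp; ring
    rw [h2] at h'
    have h3 : Bv^2/Cv ≤ Av := by linarith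
    calc Bv^2 = (Bv^2/Cv) * Cv := by field_simp
    _ ≤ Av * Cv := by nlinarith

/-- Key trace bound for the closed-loop Lyapunov analysis: there exist `a, b > 0`, depending
only on `L` and `λ`, such that every solution of the target system
`w̃_t + w̃_x + w̃_xxx + λ w̃ = 0`, `w̃(t,0) = w̃(t,L) = w̃_x(t,L) = 0` satisfies
`(w̃_xx(t,L))² ≤ a ∫₀ᴸ w̃² + b ∫₀ᴸ w̃_t²` for all `t ≥ 0`. -/
theorem target_system_trace_bound (L lam : ℝ) (hL : 0 < L) (hlam : 0 < lam) :
    ∃ a > (0:ℝ), ∃ b > (0:ℝ),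
      ∀ wt : ℝ → ℝ → ℝ, ContDiff ℝ (⊤ : ℕ∞) (Function.uncurry wt) →
        (∀ t ≥ (0:ℝ), ∀ x ∈ Set.Icc (0:ℝ) L,
          deriv (fun s => wt s x) t + deriv (fun y => wt t y) x
            + iteratedDeriv 3 (fun y => wt t y) x + lam * wt t x = 0) →
        (∀ t ≥ (0:ℝ), wt t 0 = 0) →
        (∀ t ≥ (0:ℝ), wt t L = 0) →
        (∀ t ≥ (0:ℝ), deriv (fun y => wt t y) L = 0) →
        ∀ t ≥ (0:ℝ),
          (iteratedDeriv 2 (fun y => wt t y) L) ^ 2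
            ≤ a * (∫ x in (0:ℝ)..L, (wt t x) ^ 2)
              + b * (∫ x in (0:ℝ)..L, (deriv (fun s => wt s x) t) ^ 2) := by
  refine ⟨4/L + lam^2*L, by positivity, L, hL, ?_⟩
  intro wt hW hPDE hbc0 hbcL hbcL' t ht
  have hu : ContDiff ℝ (⊤ : ℕ∞) (fun y => wt t y) :=
    hW.comp (contDiff_const.prodMk contDiff_id)
  set u : ℝ → ℝ := fun y => wt t y with hudef
  set f : ℝ → ℝ := fun x => deriv (fun s => wt s x) t with hfdef
  -- continuity of f
  have hfd : ∀ x, HasDerivAt (fun s => wt s x)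
      ((fderiv ℝ (Function.uncurry wt) (t, x)) (1, 0)) t := by
    intro x
    have h1 : HasFDerivAt (Function.uncurry wt)
        (fderiv ℝ (Function.uncurry wt) (t, x)) (t, x) :=
      (hW.differentiable (by simp) (t, x)).hasFDerivAt
    have h2 : HasDerivAt (fun s => (s, x)) ((1:ℝ), (0:ℝ)) t :=
      (hasDerivAt_id t).prodMk (hasDerivAt_const t x)
    exact h1.comp_hasDerivAt t h2
  have hfeq : f = fun x => (fderiv ℝ (Function.uncurry wt) (t, x)) (1, 0) :=
    funext fun x => (hfd x).deriv
  have hfc : Continuous f := by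
    rw [hfeq]
    exact Continuous.clm_apply
      ((hW.continuous_fderiv (by simp)).comp (Continuous.prodMk_right t)) continuous_const
  have huc : Continuous u := hu.continuous
  have hduc : Continuous (deriv u) := by
    have := my_contdiff_iteratedDeriv hu 1
    rwa [iteratedDeriv_one] at this
  have hd0 : ∀ x, HasDerivAt u (deriv u x) x := fun x =>
    ((hu.differentiable (by simp)) x).hasDerivAt
  have hd1 : ∀ x, HasDerivAt (deriv u) (iteratedDeriv 2 u x) x := fun x => by
    have := my_hasDerivAt_iteratedDeriv hu 1 x
    rwa [iteratedDeriv_one] at this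
  have hd2 : ∀ x, HasDerivAt (iteratedDeriv 2 u) (iteratedDeriv 3 u x) x := fun x =>
    my_hasDerivAt_iteratedDeriv hu 2 x
  set Ψ : ℝ → ℝ := fun x =>
    x^2 * iteratedDeriv 2 u x - 2*x*(deriv u x) + 2*u x + x^2 * u x with hΨdef
  have hΨd : ∀ x, HasDerivAt Ψ
      (x^2*iteratedDeriv 3 u x + x^2*deriv u x + 2*x*u x) x := by
    intro x
    have h1 := (hasDerivAt_pow 2 x).mul (hd2 x)
    have h2 := ((hasDerivAt_id x).const_mul (2:ℝ)).mul (hd1 x)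
    have h3 := (hd0 x).const_mul (2:ℝ)
    have h4 := (hasDerivAt_pow 2 x).mul (hd0 x)
    have h5 := ((h1.sub h2).add h3).add h4
    refine (h5.congr_deriv ?_).congr_of_eventuallyEq (Filter.Eventually.of_forall fun y => ?_)
    simp only [id_eq, pow_one, show (2:ℕ) - 1 = 1 from rfl]
    push_cast
    ring
    simp only [hΨdef, Pi.add_apply, Pi.sub_apply, Pi.mul_apply, id_eq]
  have hint : IntervalIntegrable
      (fun x => x^2*iteratedDeriv 3 u x + x^2*deriv u x + 2*x*u x) volume 0 L :=
    ((((continuous_pow 2).mul (my_contdiff_iteratedDeriv hu 3)).add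
      ((continuous_pow 2).mul hduc)).add
      ((continuous_const.mul continuous_id).mul huc)).intervalIntegrable _ _
  have hFTC : ∫ x in (0:ℝ)..L, (x^2*iteratedDeriv 3 u x + x^2*deriv u x + 2*x*u x)
      = Ψ L - Ψ 0 :=
    intervalIntegral.integral_eq_sub_of_hasDerivAt (fun x _ => hΨd x) hint
  have huL : u L = 0 := hbcL t ht
  have huL' : deriv u L = 0 := hbcL' t ht
  have hu0 : u 0 = 0 := hbc0 t ht
  have hΨL : Ψ L = L^2 * iteratedDeriv 2 u L := by
    simp only [hΨdef]; rw [huL, huL']; ring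
  have hΨ0 : Ψ 0 = 0 := by
    simp only [hΨdef]; rw [hu0]; ring
  have hcong : ∫ x in (0:ℝ)..L, (x^2*iteratedDeriv 3 u x + x^2*deriv u x + 2*x*u x)
      = ∫ x in (0:ℝ)..L, ((-(x^2 * f x) + -(lam * (x^2 * u x))) + 2*(x*u x)) := by
    apply intervalIntegral.integral_congr
    intro x hx
    have hx' : x ∈ Set.Icc 0 L := by rwa [Set.uIcc_of_le hL.le] at hx
    have hpde : f x + deriv u x + iteratedDeriv 3 u x + lam * u x = 0 := hPDE t ht x hx'
    linear_combination x^2 * hpde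
  have iA : IntervalIntegrable (fun x => x^2 * f x) volume 0 L :=
    ((continuous_pow 2).mul hfc).intervalIntegrable _ _
  have iB : IntervalIntegrable (fun x => x^2 * u x) volume 0 L :=
    ((continuous_pow 2).mul huc).intervalIntegrable _ _
  have iC : IntervalIntegrable (fun x => x * u x) volume 0 L :=
    (continuous_id.mul huc).intervalIntegrable _ _
  set A := ∫ x in (0:ℝ)..L, x^2 * f x with hAdef
  set B := ∫ x in (0:ℝ)..L, x^2 * u x with hBdef
  set C := ∫ x in (0:ℝ)..L, x * u x with hCdef
  have hsplit : ∫ x in (0:ℝ)..L, ((-(x^2 * f x) + -(lam * (x^2 * u x))) + 2*(x*u x))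
      = (-A + -(lam * B)) + 2*C := by
    have j1 : IntervalIntegrable (fun x : ℝ => -(x^2 * f x) + -(lam * (x^2 * u x))) volume 0 L :=
      ((((continuous_pow 2).mul hfc).neg).add
        ((continuous_const.mul ((continuous_pow 2).mul huc)).neg)).intervalIntegrable _ _
    have j2 : IntervalIntegrable (fun x : ℝ => 2 * (x * u x)) volume 0 L :=
      (continuous_const.mul (continuous_id.mul huc)).intervalIntegrable _ _
    have j3 : IntervalIntegrable (fun x : ℝ => -(x^2 * f x)) volume 0 L :=
      (((continuous_pow 2).mul hfc).neg).intervalIntegrable _ _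
    have j4 : IntervalIntegrable (fun x : ℝ => -(lam * (x^2 * u x))) volume 0 L :=
      ((continuous_const.mul ((continuous_pow 2).mul huc)).neg).intervalIntegrable _ _
    rw [intervalIntegral.integral_add j1 j2,
      intervalIntegral.integral_add j3 j4,
      intervalIntegral.integral_neg, intervalIntegral.integral_neg,
      intervalIntegral.integral_const_mul, intervalIntegral.integral_const_mul]
  have hiden : L^2 * iteratedDeriv 2 u L = (-A + -(lam * B)) + 2*C := by
    rw [← hsplit, ← hcong, hFTC, hΨL, hΨ0]; ring
  -- Cauchy-Schwarz bounds
  set U := ∫ x in (0:ℝ)..L, (u x)^2 with hUdef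
  set F := ∫ x in (0:ℝ)..L, (f x)^2 with hFdef
  have hU0 : 0 ≤ U := intervalIntegral.integral_nonneg hL.le (fun x _ => sq_nonneg _)
  have hF0 : 0 ≤ F := intervalIntegral.integral_nonneg hL.le (fun x _ => sq_nonneg _)
  have hx4 : (∫ x in (0:ℝ)..L, ((x:ℝ)^2)^2) = L^5/5 := by
    have h1 : ∀ x:ℝ, (x^2)^2 = x^4 := fun x => by ring
    simp_rw [h1]
    rw [integral_pow]; norm_num
  have hx2 : (∫ x in (0:ℝ)..L, (x:ℝ)^2) = L^3/3 := by
    rw [integral_pow]; norm_num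
  have csA : A^2 ≤ (L^5/5) * F := by
    have := my_cs hL.le (continuous_pow 2) hfc
    rwa [hx4] at this
  have csB : B^2 ≤ (L^5/5) * U := by
    have := my_cs hL.le (continuous_pow 2) huc
    rwa [hx4] at this
  have csC : C^2 ≤ (L^3/3) * U := by
    have := my_cs hL.le continuous_id huc
    simp only [id_eq] at this
    rwa [hx2] at this
  -- arithmetic finish
  set D := iteratedDeriv 2 u L with hDdef
  have e3 : ((-A + -(lam * B)) + 2*C)^2 ≤ 3*(4*C^2 + A^2 + lam^2*B^2) := by
    nlinarith [sq_nonneg (2*C + A), sq_nonneg (2*C + lam*B), sq_nonneg (A - lam*B)]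
  have hlB : lam^2 * B^2 ≤ lam^2 * ((L^5/5) * U) :=
    mul_le_mul_of_nonneg_left csB (sq_nonneg lam)
  have h4eq : (L^2*D)^2 = L^4*D^2 := by ring
  have h6 : L^4 * D^2 ≤ 3*(4*C^2 + A^2 + lam^2*B^2) := by
    calc L^4 * D^2 = ((-A + -(lam * B)) + 2*C)^2 := by rw [← h4eq, hiden]
    _ ≤ 3*(4*C^2 + A^2 + lam^2*B^2) := e3
  have hmain : L^4 * D^2 ≤ 4*L^3*U + lam^2*L^5*U + L^5*F := by
    have hL5U : 0 ≤ lam^2 * L^5 * U := by positivity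
    have hL5F : 0 ≤ L^5 * F := by positivity
    linarith [h6, csA, csC, hlB, hL5U, hL5F]
  have hfin : L^4 * ((4/L + lam^2*L) * U + L * F)
      = 4*L^3*U + lam^2*L^5*U + L^5*F + (lam^2*L^5*U - lam^2*L^5*U) := by
    field_simp; ring
  have hmain2 : L^4 * D^2 ≤ L^4 * ((4/L + lam^2*L) * U + L * F) := by
    rw [hfin]; linarith
  have hfinal : D^2 ≤ (4/L + lam^2*L) * U + L * F :=
    le_of_mul_le_mul_left hmain2 (by positivity)
  exact hfinal
end

section
/- Let L > 0, λ > 0, let g : ℝ → ℝ be continuous and h : ℝ → ℝ be continuous. Then for every ε > 0 there exists a constant C_ε > 0, depending only on ε, L and max_{x ∈ [0,L]} |g(x)|, such that for every smooth (C^∞) function ŵ : ℝ × ℝ → ℝ satisfying, for all t ≥ 0 and x ∈ [0,L], ∂_t ŵ + ∂_x ŵ + ∂_x^3 ŵ + λ ŵ = −g(x)·h(t), with ŵ(t,0) = ŵ(t,L) = 0 and ∂_x ŵ(t,L) = 0 for all t ≥ 0, and for every t ≥ 0, one has d/dt ∫₀ᴸ ŵ(t,x)² dx ≤ (−2λ +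 ε) ∫₀ᴸ ŵ(t,x)² dx + C_ε · h(t)². -/
open MeasureTheory

/-- Lyapunov estimate for the forced target system: for every `ε > 0` there is `C_ε > 0`
(depending only on `ε`, `L` and `max_{[0,L]} |g|`) such that every solution of
`ŵ_t + ŵ_x + ŵ_xxx + λ ŵ = -g(x) h(t)` with `ŵ(t,0) = ŵ(t,L) = ŵ_x(t,L) = 0` satisfies
`d/dt ∫₀ᴸ ŵ² ≤ (-2λ + ε) ∫₀ᴸ ŵ² + C_ε h(t)²`. -/
theorem forced_target_system_lyapunov_estimate
    (L lam : ℝ) (hL : 0 < L) (hlam : 0 < lam)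
    (g h : ℝ → ℝ) (hg : Continuous g) (hh : Continuous h) :
    ∀ ε > (0:ℝ), ∃ C > (0:ℝ),
      ∀ wh : ℝ → ℝ → ℝ, ContDiff ℝ (⊤ : ℕ∞) (Function.uncurry wh) →
        (∀ t ≥ (0:ℝ), ∀ x ∈ Set.Icc (0:ℝ) L,
          deriv (fun s => wh s x) t + deriv (fun y => wh t y) x
            + iteratedDeriv 3 (fun y => wh t y) x + lam * wh t x = -(g x * h t)) →
        (∀ t ≥ (0:ℝ), wh t 0 = 0) →
        (∀ t ≥ (0:ℝ), wh t L = 0) →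
        (∀ t ≥ (0:ℝ), deriv (fun y => wh t y) L = 0) →
        ∀ t ≥ (0:ℝ),
          deriv (fun s => ∫ x in (0:ℝ)..L, (wh s x) ^ 2) t
            ≤ (-2 * lam + ε) * (∫ x in (0:ℝ)..L, (wh t x) ^ 2) + C * (h t) ^ 2 := by
  intro ε hε
  -- a bound for |g| on [0, L]
  obtain ⟨G0, hG0⟩ := isCompact_Icc.exists_bound_of_continuousOn
    (s := Set.Icc (0:ℝ) L) hg.continuousOn
  set G : ℝ := max G0 0 with hGdef
  have hGnn : 0 ≤ G := le_max_right _ _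
  have hG : ∀ x ∈ Set.Icc (0:ℝ) L, |g x| ≤ G := fun x hx =>
    le_trans (hG0 x hx) (le_max_left _ _)
  refine ⟨(L * G ^ 2 + 1) / ε, by positivity, ?_⟩
  intro wh hW hPDE hb0 hbL hbxL t ht
  set W : ℝ × ℝ → ℝ := Function.uncurry wh with hWdef
  have hWd : Differentiable ℝ W := hW.differentiable (by simp)
  set Wt : ℝ × ℝ → ℝ := fun p => fderiv ℝ W p (1, 0) with hWtdef
  have hWtc : Continuous Wt :=
    (hW.continuous_fderiv (by simp)).clm_apply continuous_const
  have hWt_deriv : ∀ s x : ℝ, HasDerivAt (fun s' => wh s' x) (Wt (s, x)) s := by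
    intro s x
    have h1 : HasDerivAt (fun s' : ℝ => (s', x)) ((1:ℝ), (0:ℝ)) s :=
      (hasDerivAt_id s).prodMk (hasDerivAt_const s x)
    exact (hWd (s, x)).hasFDerivAt.comp_hasDerivAt s h1
  have hsq : ∀ s x : ℝ, HasDerivAt (fun s' => wh s' x ^ 2)
      (2 * wh s x * Wt (s, x)) s := by
    intro s x
    have := (hWt_deriv s x).fun_pow 2
    simpa using this
  -- one-variable slices in x
  set u : ℝ → ℝ := wh t with hudef
  have hu : ContDiff ℝ (⊤ : ℕ∞) u := by
    have : ContDiff ℝ (⊤ : ℕ∞) fun y : ℝ => ((t, y) : ℝ × ℝ) := contDiff_const.prodMk contDiff_id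
    exact hW.comp this
  have huinf : ContDiff ℝ (⊤:ℕ∞) u := hu.of_le (by simp)
  obtain ⟨hud, hu1⟩ := contDiff_infty_iff_deriv.mp huinf
  set u1 : ℝ → ℝ := deriv u with hu1def
  obtain ⟨hu1d, hu2⟩ := contDiff_infty_iff_deriv.mp hu1
  set u2 : ℝ → ℝ := deriv u1 with hu2def
  obtain ⟨hu2d, hu3⟩ := contDiff_infty_iff_deriv.mp hu2
  set u3 : ℝ → ℝ := deriv u2 with hu3def
  have hiter : iteratedDeriv 3 u = u3 := by
    rw [show (3:ℕ) = 2 + 1 from rfl, iteratedDeriv_succ,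
      show (2:ℕ) = 1 + 1 from rfl, iteratedDeriv_succ, iteratedDeriv_one]
  have huc : Continuous u := hu.continuous
  have hu1c : Continuous u1 := hu1.continuous
  have hu3c : Continuous u3 := hu3.continuous
  have hcW : Continuous fun x : ℝ => Wt (t, x) :=
    hWtc.comp (continuous_const.prodMk continuous_id)
  -- Step 1: differentiate the energy under the integral sign
  have hKcompact : IsCompact ((Set.Icc (t-1) (t+1)) ×ˢ (Set.Icc (0:ℝ) L)) :=
    isCompact_Icc.prod isCompact_Icc
  have hφc : Continuous fun p : ℝ × ℝ => 2 * W p * Wt p := by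
    exact (continuous_const.mul hW.continuous).mul hWtc
  obtain ⟨M, hM⟩ := hKcompact.exists_bound_of_continuousOn hφc.continuousOn
  have hEnergy : HasDerivAt (fun s => ∫ x in (0:ℝ)..L, wh s x ^ 2)
      (∫ x in (0:ℝ)..L, 2 * wh t x * Wt (t, x)) t := by
    have hcont : ∀ s : ℝ, Continuous fun x => wh s x ^ 2 := by
      intro s
      exact ((hW.continuous).comp (continuous_const.prodMk continuous_id)).pow 2
    refine (intervalIntegral.hasDerivAt_integral_of_dominated_loc_of_deriv_le
      (F := fun s x => wh s x ^ 2) (F' := fun s x => 2 * wh s x * Wt (s, x))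
      (bound := fun _ => M) (Metric.ball_mem_nhds t one_pos) ?_ ?_ ?_ ?_ ?_ ?_).2
    · exact Filter.Eventually.of_forall fun s => (hcont s).aestronglyMeasurable
    · exact (hcont t).intervalIntegrable 0 L
    · exact ((continuous_const.mul huc).mul hcW).aestronglyMeasurable
    · refine ae_of_all _ fun x hx s hs => ?_
      have hxI : x ∈ Set.Icc (0:ℝ) L := by
        rw [Set.uIoc_of_le hL.le] at hx; exact Set.Ioc_subset_Icc_self hx
      have hsI : s ∈ Set.Icc (t-1) (t+1) := by
        rw [Metric.mem_ball, Real.dist_eq, abs_sub_lt_iff] at hs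
        constructor <;> linarith [hs.1, hs.2]
      exact hM (s, x) (Set.mk_mem_prod hsI hxI)
    · exact intervalIntegrable_const
    · exact ae_of_all _ fun x _ s _ => hsq s x
  rw [hEnergy.deriv]
  -- the four pieces of the integrand
  set A : ℝ → ℝ := fun x => -(2 * g x * h t * u x) with hAdef
  set B1 : ℝ → ℝ := fun x => -(2 * u x * u1 x) with hB1def
  set B2 : ℝ → ℝ := fun x => -(2 * u x * u3 x) with hB2def
  set B3 : ℝ → ℝ := fun x => -(2 * lam * u x ^ 2) with hB3def
  have hIA : IntervalIntegrable A volume 0 L := by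
    apply Continuous.intervalIntegrable
    exact (((continuous_const.mul hg).mul continuous_const).mul huc).neg
  have hIB1 : IntervalIntegrable B1 volume 0 L := by
    apply Continuous.intervalIntegrable
    exact ((continuous_const.mul huc).mul hu1c).neg
  have hIB2 : IntervalIntegrable B2 volume 0 L := by
    apply Continuous.intervalIntegrable
    exact ((continuous_const.mul huc).mul hu3c).neg
  have hIB3 : IntervalIntegrable B3 volume 0 L := by
    apply Continuous.intervalIntegrable
    exact (continuous_const.mul (huc.pow 2)).neg
  -- Step 2: use the PDE to rewrite the integrand
  have hcongr : (∫ x in (0:ℝ)..L, 2 * wh t x * Wt (t, x))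
      = ∫ x in (0:ℝ)..L, (A x + B1 x + B2 x + B3 x) := by
    apply intervalIntegral.integral_congr
    intro x hx
    rw [Set.uIcc_of_le hL.le] at hx
    have hpde := hPDE t ht x hx
    rw [(hWt_deriv t x).deriv] at hpde
    have h3 : iteratedDeriv 3 (fun y => wh t y) x = u3 x := by
      rw [show (fun y => wh t y) = u from rfl, hiter]
    have h1 : deriv (fun y => wh t y) x = u1 x := rfl
    rw [h3, h1] at hpde
    have heq : Wt (t, x) = -(g x * h t) - u1 x - u3 x - lam * wh t x := by linarith
    show (2 * wh t x * Wt (t, x)) = A x + B1 x + B2 x + B3 x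
    rw [heq]
    show 2 * u x * (-(g x * h t) - u1 x - u3 x - lam * u x)
      = A x + B1 x + B2 x + B3 x
    simp only [hAdef, hB1def, hB2def, hB3def]
    ring
  rw [hcongr]
  -- split the integral
  have hsplit : (∫ x in (0:ℝ)..L, (A x + B1 x + B2 x + B3 x))
      = (∫ x in (0:ℝ)..L, A x) + (∫ x in (0:ℝ)..L, B1 x)
        + (∫ x in (0:ℝ)..L, B2 x) + (∫ x in (0:ℝ)..L, B3 x) := by
    rw [intervalIntegral.integral_add ((hIA.add hIB1).add hIB2) hIB3,
      intervalIntegral.integral_add (hIA.add hIB1) hIB2,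
      intervalIntegral.integral_add hIA hIB1]
  rw [hsplit]
  set E : ℝ := ∫ x in (0:ℝ)..L, wh t x ^ 2 with hEdef
  -- Step 3: ∫ B1 = 0
  have hu' : ∀ x : ℝ, HasDerivAt u (u1 x) x := fun x => (hud x).hasDerivAt
  have hu1' : ∀ x : ℝ, HasDerivAt u1 (u2 x) x := fun x => (hu1d x).hasDerivAt
  have hu2' : ∀ x : ℝ, HasDerivAt u2 (u3 x) x := fun x => (hu2d x).hasDerivAt
  have hB1val : (∫ x in (0:ℝ)..L, B1 x) = 0 := by
    have hd : ∀ x ∈ Set.uIcc (0:ℝ) L, HasDerivAt (fun y => u y ^ 2)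
        (2 * u x * u1 x) x := by
      intro x _
      have := (hu' x).fun_pow 2
      simpa using this
    have hInt : IntervalIntegrable (fun x => 2 * u x * u1 x) volume 0 L :=
      ((continuous_const.mul huc).mul hu1c).intervalIntegrable 0 L
    have := intervalIntegral.integral_eq_sub_of_hasDerivAt hd hInt
    have hzero : (∫ x in (0:ℝ)..L, 2 * u x * u1 x) = 0 := by
      rw [this, show u L = 0 from hbL t ht, show u 0 = 0 from hb0 t ht]; ring
    calc (∫ x in (0:ℝ)..L, B1 x) = -∫ x in (0:ℝ)..L, 2 * u x * u1 x := by
          rw [← intervalIntegral.integral_neg]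
      _ = 0 := by rw [hzero]; ring
  -- Step 4: ∫ B2 = -(u1 0)^2
  have hB2val : (∫ x in (0:ℝ)..L, B2 x) = -(u1 0 ^ 2) := by
    have hd : ∀ x ∈ Set.uIcc (0:ℝ) L, HasDerivAt (fun y => 2 * (u y * u2 y) - u1 y ^ 2)
        (2 * u x * u3 x) x := by
      intro x _
      have h1 : HasDerivAt (fun y => u y * u2 y) (u1 x * u2 x + u x * u3 x) x :=
        (hu' x).mul (hu2' x)
      have h2 := h1.const_mul (2:ℝ)
      have h3 : HasDerivAt (fun y => u1 y ^ 2) (2 * u1 x * u2 x) x := by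
        have := (hu1' x).fun_pow 2
        simpa using this
      have h4 := h2.fun_sub h3
      exact h4.congr_deriv (by ring)
    have hInt : IntervalIntegrable (fun x => 2 * u x * u3 x) volume 0 L :=
      ((continuous_const.mul huc).mul hu3c).intervalIntegrable 0 L
    have hval := intervalIntegral.integral_eq_sub_of_hasDerivAt hd hInt
    have hu1L : u1 L = 0 := hbxL t ht
    have h2u3 : (∫ x in (0:ℝ)..L, 2 * u x * u3 x) = u1 0 ^ 2 := by
      rw [hval, show u L = 0 from hbL t ht, show u 0 = 0 from hb0 t ht, hu1L]; ring
    calc (∫ x in (0:ℝ)..L, B2 x) = -∫ x in (0:ℝ)..L, 2 * u x * u3 x := by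
          rw [← intervalIntegral.integral_neg]
      _ = -(u1 0 ^ 2) := by rw [h2u3]
  -- Step 5: ∫ B3 = -2λ E
  have hB3val : (∫ x in (0:ℝ)..L, B3 x) = -(2 * lam) * E := by
    have : (∫ x in (0:ℝ)..L, B3 x) = ∫ x in (0:ℝ)..L, (-(2 * lam)) * u x ^ 2 := by
      apply intervalIntegral.integral_congr
      intro x _
      show -(2 * lam * u x ^ 2) = -(2 * lam) * u x ^ 2
      ring
    rw [this, intervalIntegral.integral_const_mul, hEdef]
  -- Step 6: bound ∫ A
  set c0 : ℝ := G ^ 2 * h t ^ 2 / ε with hc0def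
  have hc0nn : 0 ≤ c0 := by positivity
  have hAbound : (∫ x in (0:ℝ)..L, A x) ≤ ε * E + L * c0 := by
    have hIrhs : IntervalIntegrable (fun x => ε * u x ^ 2 + c0) volume 0 L :=
      ((continuous_const.mul (huc.pow 2)).add continuous_const).intervalIntegrable 0 L
    have hmono : (∫ x in (0:ℝ)..L, A x) ≤ ∫ x in (0:ℝ)..L, (ε * u x ^ 2 + c0) := by
      apply intervalIntegral.integral_mono_on hL.le hIA hIrhs
      intro x hx
      have hgx := hG x hx
      have hg2 : g x ^ 2 ≤ G ^ 2 := by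
        have := abs_nonneg (g x)
        nlinarith [sq_abs (g x)]
      have hεc0 : ε * c0 = G ^ 2 * h t ^ 2 := by
        rw [hc0def]; field_simp
      show -(2 * g x * h t * u x) ≤ ε * u x ^ 2 + c0
      nlinarith [sq_nonneg (ε * u x + g x * h t), sq_nonneg (h t), hε, hc0nn]
    have hrhs : (∫ x in (0:ℝ)..L, (ε * u x ^ 2 + c0)) = ε * E + L * c0 := by
      rw [intervalIntegral.integral_add
        (show IntervalIntegrable (fun x => ε * u x ^ 2) volume 0 L from
          (continuous_const.mul (huc.pow 2)).intervalIntegrable 0 L)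
        (intervalIntegrable_const),
        intervalIntegral.integral_const_mul, intervalIntegral.integral_const]
      simp [hEdef, smul_eq_mul, hudef]
    linarith [hmono, le_of_eq hrhs]
  -- conclusion
  have hCh : L * c0 ≤ (L * G ^ 2 + 1) / ε * h t ^ 2 := by
    have hCeq : (L * G ^ 2 + 1) / ε * h t ^ 2 = L * c0 + h t ^ 2 / ε := by
      rw [hc0def]; field_simp
    have : 0 ≤ h t ^ 2 / ε := by positivity
    linarith
  have hsq0 : 0 ≤ u1 0 ^ 2 := sq_nonneg _
  rw [hB1val, hB2val, hB3val]
  linarith [hAbound, hCh]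
end

section
/- Let L > 0, λ > 0 and let g : ℝ → ℝ be continuous. Then for every ε with 0 < ε < λ there exists a constant C > 0 such that the following holds. Let ŵ, w̃ : ℝ × ℝ → ℝ be smooth (C^∞) functions satisfying, for all t ≥ 0 and x ∈ [0,L]: ∂_t ŵ + ∂_x ŵ + ∂_x^3 ŵ + λ ŵ = −g(x)·∂_x² w̃(t,L), with ŵ(t,0) = ŵ(t,L) = 0, ∂_x ŵ(t,L) = 0; and ∂_t w̃ + ∂_x w̃ + ∂_x^3 w̃ + λ w̃ = 0, with w̃(t,0) = w̃(t,L) = 0, ∂_x w̃(t,L) = 0. Then for all t ≥ 0, ∫₀ᴸ ŵ(t,x)² dx + ∫₀ᴸ w̃(t,x)² dx + ∫₀ᴸ (∂_t w̃(t,x))² dx ≤ C e^{−2(λ−ε)t} ( ∫₀ᴸ ŵ(0,x)² dx + ∫₀ᴸ w̃(0,x)² dx + ∫₀ᴸ (∂_t w̃(0,x))² dx ). -/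
set_option maxHeartbeats 1000000
open MeasureTheory Function Set intervalIntegral ContDiff

noncomputable def pdt (u : ℝ → ℝ → ℝ) : ℝ → ℝ → ℝ := fun t x => deriv (fun s => u s x) t
noncomputable def pdx (u : ℝ → ℝ → ℝ) : ℝ → ℝ → ℝ := fun t x => deriv (fun y => u t y) x

variable {u : ℝ → ℝ → ℝ}

lemma hasDerivAt_slice_x (hu : ContDiff ℝ (⊤ : ℕ∞) (uncurry u)) (t x : ℝ) :
    HasDerivAt (fun y => u t y) (fderiv ℝ (uncurry u) (t, x) (0, 1)) x := by
  have h1 : HasFDerivAt (uncurry u) (fderiv ℝ (uncurry u) (t, x)) (t, x) :=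
    (hu.differentiable (by simp) (t, x)).hasFDerivAt
  have h2 : HasDerivAt (fun y => ((t, y) : ℝ × ℝ)) ((0 : ℝ), (1 : ℝ)) x :=
    (hasDerivAt_const x t).prodMk (hasDerivAt_id x)
  exact h1.comp_hasDerivAt x h2

lemma hasDerivAt_slice_t (hu : ContDiff ℝ (⊤ : ℕ∞) (uncurry u)) (t x : ℝ) :
    HasDerivAt (fun s => u s x) (fderiv ℝ (uncurry u) (t, x) (1, 0)) t := by
  have h1 : HasFDerivAt (uncurry u) (fderiv ℝ (uncurry u) (t, x)) (t, x) :=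
    (hu.differentiable (by simp) (t, x)).hasFDerivAt
  have h2 : HasDerivAt (fun s => ((s, x) : ℝ × ℝ)) ((1 : ℝ), (0 : ℝ)) t :=
    (hasDerivAt_id t).prodMk (hasDerivAt_const t x)
  exact h1.comp_hasDerivAt t h2

lemma pdx_eq (hu : ContDiff ℝ (⊤ : ℕ∞) (uncurry u)) (t x : ℝ) :
    pdx u t x = fderiv ℝ (uncurry u) (t, x) (0, 1) := (hasDerivAt_slice_x hu t x).deriv

lemma pdt_eq (hu : ContDiff ℝ (⊤ : ℕ∞) (uncurry u)) (t x : ℝ) :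
    pdt u t x = fderiv ℝ (uncurry u) (t, x) (1, 0) := (hasDerivAt_slice_t hu t x).deriv

lemma hasDerivAt_pdx (hu : ContDiff ℝ (⊤ : ℕ∞) (uncurry u)) (t x : ℝ) :
    HasDerivAt (fun y => u t y) (pdx u t x) x := by
  rw [pdx_eq hu]; exact hasDerivAt_slice_x hu t x

lemma hasDerivAt_pdt (hu : ContDiff ℝ (⊤ : ℕ∞) (uncurry u)) (t x : ℝ) :
    HasDerivAt (fun s => u s x) (pdt u t x) t := by
  rw [pdt_eq hu]; exact hasDerivAt_slice_t hu t x

lemma contDiff_pdx (hu : ContDiff ℝ (⊤ : ℕ∞) (uncurry u)) :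
    ContDiff ℝ (⊤ : ℕ∞) (uncurry (pdx u)) := by
  have : uncurry (pdx u) = fun p : ℝ × ℝ => fderiv ℝ (uncurry u) p (0, 1) := by
    funext p; exact pdx_eq hu p.1 p.2
  rw [this]
  exact (hu.fderiv_right (le_of_eq rfl)).clm_apply contDiff_const

lemma contDiff_pdt (hu : ContDiff ℝ (⊤ : ℕ∞) (uncurry u)) :
    ContDiff ℝ (⊤ : ℕ∞) (uncurry (pdt u)) := by
  have : uncurry (pdt u) = fun p : ℝ × ℝ => fderiv ℝ (uncurry u) p (1, 0) := by
    funext p; exact pdt_eq hu p.1 p.2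
  rw [this]
  exact (hu.fderiv_right (le_of_eq rfl)).clm_apply contDiff_const

-- fderiv of p ↦ fderiv F p v  applied to w
lemma fderiv_applied (hu : ContDiff ℝ (⊤ : ℕ∞) (uncurry u)) (p : ℝ × ℝ) (v w : ℝ × ℝ) :
    fderiv ℝ (fun q => fderiv ℝ (uncurry u) q v) p w
      = fderiv ℝ (fderiv ℝ (uncurry u)) p w v := by
  have hd : DifferentiableAt ℝ (fderiv ℝ (uncurry u)) p :=
    ((hu.fderiv_right (m := (⊤ : ℕ∞)) (le_of_eq rfl)).differentiable (by simp)) p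
  have h : HasFDerivAt (fun q => fderiv ℝ (uncurry u) q v)
      (((ContinuousLinearMap.apply ℝ ℝ v).comp (fderiv ℝ (fderiv ℝ (uncurry u)) p))) p :=
    (ContinuousLinearMap.apply ℝ ℝ v).hasFDerivAt.comp p hd.hasFDerivAt
  rw [h.fderiv]; rfl

lemma swap (hu : ContDiff ℝ (⊤ : ℕ∞) (uncurry u)) : pdt (pdx u) = pdx (pdt u) := by
  funext t x
  have hsym := second_derivative_symmetric
    (f := uncurry u) (f' := fderiv ℝ (uncurry u))
    (f'' := fderiv ℝ (fderiv ℝ (uncurry u)) (t, x))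
    (fun y => ((hu.differentiable (by simp)) y).hasFDerivAt)
    ((((hu.fderiv_right (m := (⊤ : ℕ∞)) (le_of_eq rfl)).differentiable (by simp)) (t, x)).hasFDerivAt)
    (1, 0) (0, 1)
  have h1 : pdt (pdx u) t x = fderiv ℝ (fderiv ℝ (uncurry u)) (t, x) (1, 0) (0, 1) := by
    rw [pdt_eq (by
      have : uncurry (pdx u) = fun p : ℝ × ℝ => fderiv ℝ (uncurry u) p (0, 1) := by
        funext p; exact pdx_eq hu p.1 p.2
      rw [this]; exact (hu.fderiv_right (le_of_eq rfl)).clm_apply contDiff_const) t x]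
    have : uncurry (pdx u) = fun p : ℝ × ℝ => fderiv ℝ (uncurry u) p (0, 1) := by
      funext p; exact pdx_eq hu p.1 p.2
    rw [this, fderiv_applied hu]
  have h2 : pdx (pdt u) t x = fderiv ℝ (fderiv ℝ (uncurry u)) (t, x) (0, 1) (1, 0) := by
    rw [pdx_eq (by
      have : uncurry (pdt u) = fun p : ℝ × ℝ => fderiv ℝ (uncurry u) p (1, 0) := by
        funext p; exact pdt_eq hu p.1 p.2
      rw [this]; exact (hu.fderiv_right (le_of_eq rfl)).clm_apply contDiff_const) t x]
    have : uncurry (pdt u) = fun p : ℝ × ℝ => fderiv ℝ (uncurry u) p (1, 0) := by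
      funext p; exact pdt_eq hu p.1 p.2
    rw [this, fderiv_applied hu]
  rw [h1, h2, hsym]

lemma cont_slice (hu : ContDiff ℝ (⊤ : ℕ∞) (uncurry u)) (t : ℝ) :
    Continuous (fun x => u t x) :=
  hu.continuous.comp (Continuous.prodMk_right t)

lemma hasDerivAt_energy (hu : ContDiff ℝ (⊤ : ℕ∞) (uncurry u)) (L t₀ : ℝ) :
    HasDerivAt (fun t => ∫ x in (0:ℝ)..L, (u t x) ^ 2)
      (∫ x in (0:ℝ)..L, 2 * u t₀ x * pdt u t₀ x) t₀ := by
  have hcont : Continuous (fun p : ℝ × ℝ => 2 * u p.1 p.2 * pdt u p.1 p.2) := by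
    have h1 : Continuous (uncurry u) := hu.continuous
    have h2 : Continuous (uncurry (pdt u)) := (contDiff_pdt hu).continuous
    exact (continuous_const.mul h1).mul h2
  obtain ⟨M, hM⟩ : ∃ M, ∀ p ∈ Icc (t₀ - 1) (t₀ + 1) ×ˢ uIcc (0:ℝ) L,
      ‖2 * u p.1 p.2 * pdt u p.1 p.2‖ ≤ M :=
    (isCompact_Icc.prod isCompact_uIcc).exists_bound_of_continuousOn hcont.continuousOn
  refine (intervalIntegral.hasDerivAt_integral_of_dominated_loc_of_deriv_le
    (F := fun t x => u t x ^ 2) (F' := fun t x => 2 * u t x * pdt u t x)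
    (bound := fun _ => M) (Metric.ball_mem_nhds t₀ zero_lt_one) ?_ ?_ ?_ ?_ ?_ ?_).2
  · exact Filter.Eventually.of_forall fun t =>
      (((cont_slice hu t).pow 2)).aestronglyMeasurable
  · exact ((cont_slice hu t₀).pow 2).intervalIntegrable 0 L
  · exact (hcont.comp (Continuous.prodMk_right t₀)).aestronglyMeasurable
  · refine Filter.Eventually.of_forall fun x hx t ht => hM (t, x) ?_
    refine ⟨?_, uIoc_subset_uIcc hx⟩
    have := Metric.mem_ball.mp ht
    have := abs_lt.mp (by simpa [Real.dist_eq] using this)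
    exact ⟨by linarith [this.1], by linarith [this.2]⟩
  · exact intervalIntegrable_const
  · refine Filter.Eventually.of_forall fun x hx t ht => ?_
    have h := (hasDerivAt_pdt hu t x).fun_pow 2
    simpa [mul_comm, mul_assoc, mul_left_comm] using h

lemma spatial_ineq (L lam : ℝ) (hL : 0 < L) (a h pt : ℝ → ℝ)
    (ha : ContDiff ℝ ∞ a) (hh : Continuous h) (hpt : Continuous pt)
    (pde : ∀ x ∈ Icc (0:ℝ) L, pt x = h x - deriv a x - deriv (deriv (deriv a)) x - lam * a x)
    (hb0 : a 0 = 0) (hbL : a L = 0) (hbL' : deriv a L = 0) :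
    (∫ x in (0:ℝ)..L, 2 * a x * pt x)
      ≤ -(2*lam) * (∫ x in (0:ℝ)..L, (a x)^2) + ∫ x in (0:ℝ)..L, 2 * a x * h x := by
  have ha1 : ContDiff ℝ ∞ (deriv a) := (contDiff_infty_iff_deriv.mp ha).2
  have ha2 : ContDiff ℝ ∞ (deriv (deriv a)) := (contDiff_infty_iff_deriv.mp ha1).2
  have ha3 : ContDiff ℝ ∞ (deriv (deriv (deriv a))) := (contDiff_infty_iff_deriv.mp ha2).2
  have hda : ∀ x, HasDerivAt a (deriv a x) x := fun x =>
    ((contDiff_infty_iff_deriv.mp ha).1 x).hasDerivAt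
  have hda1 : ∀ x, HasDerivAt (deriv a) (deriv (deriv a) x) x := fun x =>
    ((contDiff_infty_iff_deriv.mp ha1).1 x).hasDerivAt
  have hda2 : ∀ x, HasDerivAt (deriv (deriv a)) (deriv (deriv (deriv a)) x) x := fun x =>
    ((contDiff_infty_iff_deriv.mp ha2).1 x).hasDerivAt
  have ca := ha.continuous
  have ca1 := ha1.continuous
  have ca3 := ha3.continuous
  have i1 : IntervalIntegrable (fun x => 2 * a x * h x) volume 0 L :=
    ((continuous_const.mul ca).mul hh).intervalIntegrable 0 L
  have i2 : IntervalIntegrable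
      (fun x => 2 * a x * deriv a x + 2 * a x * deriv (deriv (deriv a)) x) volume 0 L :=
    (((continuous_const.mul ca).mul ca1).add
      ((continuous_const.mul ca).mul ca3)).intervalIntegrable 0 L
  have i3 : IntervalIntegrable (fun x => (a x)^2) volume 0 L :=
    (ca.pow 2).intervalIntegrable 0 L
  have key : (∫ x in (0:ℝ)..L,
      (2 * a x * deriv a x + 2 * a x * deriv (deriv (deriv a)) x)) = (deriv a 0)^2 := by
    have hf : ∀ x ∈ uIcc (0:ℝ) L, HasDerivAt
        (fun x => (a x)^2 + 2 * a x * deriv (deriv a) x - (deriv a x)^2)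
        (2 * a x * deriv a x + 2 * a x * deriv (deriv (deriv a)) x) x := by
      intro x _
      have := (((hda x).pow 2).add
        ((((hda x).const_mul 2)).mul (hda2 x))).sub ((hda1 x).pow 2)
      exact this.congr_deriv (by ring)
    rw [integral_eq_sub_of_hasDerivAt hf i2]
    simp [hb0, hbL, hbL']
  have hsplit : (∫ x in (0:ℝ)..L, 2 * a x * pt x)
      = (∫ x in (0:ℝ)..L, (2 * a x * h x
          - (2 * a x * deriv a x + 2 * a x * deriv (deriv (deriv a)) x)
          - 2 * lam * (a x)^2)) := by
    apply intervalIntegral.integral_congr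
    intro x hx
    rw [uIcc_of_le hL.le] at hx
    simp only
    rw [pde x hx]; ring
  rw [hsplit, intervalIntegral.integral_sub (i1.sub i2) (i3.const_mul _),
    intervalIntegral.integral_sub i1 i2, key, intervalIntegral.integral_const_mul]
  nlinarith [sq_nonneg (deriv a 0)]

lemma sq_integral_abs_le (L : ℝ) (hL : 0 < L) (f : ℝ → ℝ) (hf : Continuous f) :
    (∫ x in (0:ℝ)..L, |f x|)^2 ≤ L * ∫ x in (0:ℝ)..L, (f x)^2 := by
  set I := ∫ x in (0:ℝ)..L, |f x| with hI
  have h0 : (0:ℝ) ≤ ∫ x in (0:ℝ)..L, (|f x| - I/L)^2 :=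
    intervalIntegral.integral_nonneg hL.le (fun x _ => sq_nonneg _)
  have hexp : (∫ x in (0:ℝ)..L, (|f x| - I/L)^2)
      = (∫ x in (0:ℝ)..L, (f x)^2) - 2*(I/L)*I + (I/L)^2*L := by
    have : ∀ x, (|f x| - I/L)^2 = (f x)^2 - 2*(I/L)*|f x| + (I/L)^2 := by
      intro x; rw [sub_sq, sq_abs]; ring
    simp_rw [this]
    rw [intervalIntegral.integral_add, intervalIntegral.integral_sub,
      intervalIntegral.integral_const_mul, intervalIntegral.integral_const]
    · simp only [smul_eq_mul, sub_zero, ← hI]; ring_nf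
    · exact (hf.pow 2).intervalIntegrable 0 L
    · exact (continuous_const.mul hf.abs).intervalIntegrable 0 L
    · exact ((hf.pow 2).sub (continuous_const.mul hf.abs)).intervalIntegrable 0 L
    · exact intervalIntegrable_const
  rw [hexp] at h0
  have : I^2/L ≤ ∫ x in (0:ℝ)..L, (f x)^2 := by
    have h2 : 2*(I/L)*I - (I/L)^2*L = I^2/L := by field_simp; ring
    nlinarith
  calc I^2 = L * (I^2/L) := by field_simp
  _ ≤ L * ∫ x in (0:ℝ)..L, (f x)^2 := by
      exact mul_le_mul_of_nonneg_left this hL.le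

lemma cont_prim (L : ℝ) (f : ℝ → ℝ) (hf : Continuous f) :
    Continuous (fun x => ∫ y in x..L, f y) := by
  have heq : (fun x => ∫ y in x..L, f y)
      = fun x => (∫ y in (0:ℝ)..L, f y) - ∫ y in (0:ℝ)..x, f y := by
    funext x
    rw [eq_sub_iff_add_eq, add_comm,
      intervalIntegral.integral_add_adjacent_intervals
        (hf.intervalIntegrable 0 x) (hf.intervalIntegrable x L)]
  rw [heq]
  exact continuous_const.sub
    (intervalIntegral.continuous_primitive (fun a b => hf.intervalIntegrable a b) 0)

lemma trace_bound (L lam : ℝ) (hL : 0 < L) (hlam : 0 < lam) (a v : ℝ → ℝ)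
    (ha : ContDiff ℝ ∞ a) (hv : Continuous v)
    (hb0 : a 0 = 0) (hbL : a L = 0) (hbL' : deriv a L = 0)
    (pde : ∀ x ∈ Icc (0:ℝ) L, deriv (deriv (deriv a)) x = -(v x) - deriv a x - lam * a x) :
    L * (deriv (deriv a) L)^2 ≤ 8*((1+lam*L)^2 + L^2) *
      ((∫ x in (0:ℝ)..L, (a x)^2) + ∫ x in (0:ℝ)..L, (v x)^2) := by
  have ha1 : ContDiff ℝ ∞ (deriv a) := (contDiff_infty_iff_deriv.mp ha).2
  have ha2 : ContDiff ℝ ∞ (deriv (deriv a)) := (contDiff_infty_iff_deriv.mp ha1).2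
  have ha3 : ContDiff ℝ ∞ (deriv (deriv (deriv a))) := (contDiff_infty_iff_deriv.mp ha2).2
  have hda : ∀ x, HasDerivAt a (deriv a x) x := fun x =>
    ((contDiff_infty_iff_deriv.mp ha).1 x).hasDerivAt
  have hda1 : ∀ x, HasDerivAt (deriv a) (deriv (deriv a) x) x := fun x =>
    ((contDiff_infty_iff_deriv.mp ha1).1 x).hasDerivAt
  have hda2 : ∀ x, HasDerivAt (deriv (deriv a)) (deriv (deriv (deriv a)) x) x := fun x =>
    ((contDiff_infty_iff_deriv.mp ha2).1 x).hasDerivAt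
  have ca := ha.continuous
  have ca1 := ha1.continuous
  have ca2 := ha2.continuous
  have ca3 := ha3.continuous
  set c := deriv (deriv a) L with hc
  -- Step 1
  have step1 : ∀ x ∈ Icc (0:ℝ) L, c = deriv (deriv a) x + a x
      - (∫ y in x..L, v y) - lam * ∫ y in x..L, a y := by
    intro x hx
    have h1 : (∫ y in x..L, deriv (deriv (deriv a)) y) = c - deriv (deriv a) x := by
      rw [intervalIntegral.integral_eq_sub_of_hasDerivAt
        (fun y _ => hda2 y) (ca3.intervalIntegrable x L)]
    have h2 : (∫ y in x..L, deriv (deriv (deriv a)) y)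
        = ∫ y in x..L, (-(v y) - deriv a y - lam * a y) := by
      apply intervalIntegral.integral_congr
      intro y hy
      rw [uIcc_of_le hx.2] at hy
      exact pde y ⟨le_trans hx.1 hy.1, hy.2⟩
    have h3 : (∫ y in x..L, (-(v y) - deriv a y - lam * a y))
        = -(∫ y in x..L, v y) - (a L - a x) - lam * ∫ y in x..L, a y := by
      rw [intervalIntegral.integral_sub, intervalIntegral.integral_sub,
        intervalIntegral.integral_neg, intervalIntegral.integral_const_mul,
        intervalIntegral.integral_eq_sub_of_hasDerivAt (fun y _ => hda y)
          (ca1.intervalIntegrable x L)]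
      · exact (hv.neg.intervalIntegrable x L)
      · exact (ca1.intervalIntegrable x L)
      · exact ((hv.neg.sub ca1).intervalIntegrable x L)
      · exact ((continuous_const.mul ca).intervalIntegrable x L)
    rw [h2, h3, hbL] at h1
    linarith
  -- Step 2 : ∫ ψ a'' = 0 with ψ x = 2/L²·x
  have step2 : (∫ x in (0:ℝ)..L, (2/L^2 * x) * deriv (deriv a) x) = 0 := by
    have hf : ∀ x ∈ uIcc (0:ℝ) L, HasDerivAt
        (fun x => (2/L^2 * x) * deriv a x - 2/L^2 * a x)
        ((2/L^2 * x) * deriv (deriv a) x) x := by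
      intro x _
      have h1 : HasDerivAt (fun y : ℝ => 2/L^2 * y) (2/L^2) x := by
        simpa using (hasDerivAt_id x).const_mul (2/L^2)
      have := (h1.mul (hda1 x)).sub ((hda x).const_mul (2/L^2))
      exact this.congr_deriv (by ring)
    rw [intervalIntegral.integral_eq_sub_of_hasDerivAt hf
      (((continuous_const.mul continuous_id).mul ca2).intervalIntegrable 0 L)]
    rw [hbL', hbL, hb0]
    ring
  -- Step 3 : representation of c
  have cprim_v := cont_prim L v hv
  have cprim_a := cont_prim L a ca
  have hwcont : Continuous (fun x => (2/L^2 * x) *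
      (a x - (∫ y in x..L, v y) - lam * ∫ y in x..L, a y)) := by
    exact (continuous_const.mul continuous_id).mul
      ((ca.sub cprim_v).sub (continuous_const.mul cprim_a))
  have step3 : c = ∫ x in (0:ℝ)..L, (2/L^2 * x) *
      (a x - (∫ y in x..L, v y) - lam * ∫ y in x..L, a y) := by
    have hsplit : (∫ x in (0:ℝ)..L, (2/L^2 * x) *
        (a x - (∫ y in x..L, v y) - lam * ∫ y in x..L, a y))
        = ∫ x in (0:ℝ)..L, ((2/L^2 * x) * c - (2/L^2 * x) * deriv (deriv a) x) := by
      apply intervalIntegral.integral_congr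
      intro x hx
      rw [uIcc_of_le hL.le] at hx
      have := step1 x hx
      simp only
      linear_combination (-(2 / L ^ 2 * x)) * this
    have i1 : IntervalIntegrable (fun x => 2/L^2 * x * c) volume 0 L :=
      Continuous.intervalIntegrable (by fun_prop) 0 L
    have i2 : IntervalIntegrable (fun x => 2/L^2 * x * deriv (deriv a) x) volume 0 L :=
      Continuous.intervalIntegrable (by fun_prop) 0 L
    rw [hsplit, intervalIntegral.integral_sub i1 i2, step2, sub_zero]
    have h4 : (fun x => 2/L^2 * x * c) = fun x : ℝ => (2*c/L^2) * x := by
      funext x; ring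
    rw [h4, intervalIntegral.integral_const_mul, integral_id]
    field_simp
    ring
  -- Step 4: bound |c|
  set Ia := ∫ x in (0:ℝ)..L, |a x| with hIadef
  set Iv := ∫ x in (0:ℝ)..L, |v x| with hIvdef
  have hIa0 : 0 ≤ Ia := intervalIntegral.integral_nonneg hL.le fun x _ => abs_nonneg _
  have hIv0 : 0 ≤ Iv := intervalIntegral.integral_nonneg hL.le fun x _ => abs_nonneg _
  have tail_le : ∀ f : ℝ → ℝ, Continuous f → ∀ x ∈ Icc (0:ℝ) L,
      |∫ y in x..L, f y| ≤ ∫ y in (0:ℝ)..L, |f y| := by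
    intro f hf x hx
    have h1 : |∫ y in x..L, f y| ≤ ∫ y in x..L, |f y| :=
      intervalIntegral.abs_integral_le_integral_abs hx.2
    have h2 : (∫ y in (0:ℝ)..L, |f y|) = (∫ y in (0:ℝ)..x, |f y|) + ∫ y in x..L, |f y| :=
      (intervalIntegral.integral_add_adjacent_intervals
        (hf.abs.intervalIntegrable 0 x) (hf.abs.intervalIntegrable x L)).symm
    have h3 : 0 ≤ ∫ y in (0:ℝ)..x, |f y| :=
      intervalIntegral.integral_nonneg hx.1 fun y _ => abs_nonneg _
    linarith
  have habs : |c| ≤ 2/L * (Ia + L*(Iv + lam*Ia)) := by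
    rw [step3]
    have h1 : |∫ x in (0:ℝ)..L, (2/L^2 * x) *
        (a x - (∫ y in x..L, v y) - lam * ∫ y in x..L, a y)|
        ≤ ∫ x in (0:ℝ)..L, |(2/L^2 * x) *
        (a x - (∫ y in x..L, v y) - lam * ∫ y in x..L, a y)| :=
      intervalIntegral.abs_integral_le_integral_abs hL.le
    have h2 : (∫ x in (0:ℝ)..L, |(2/L^2 * x) *
        (a x - (∫ y in x..L, v y) - lam * ∫ y in x..L, a y)|)
        ≤ ∫ x in (0:ℝ)..L, (2/L * (|a x| + (Iv + lam*Ia))) := by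
      apply intervalIntegral.integral_mono_on hL.le
        (hwcont.abs.intervalIntegrable 0 L)
        (Continuous.intervalIntegrable (by fun_prop) 0 L)
      intro x hx
      rw [abs_mul]
      have hψ : |2/L^2 * x| ≤ 2/L := by
        have hx0 : (0:ℝ) ≤ x := hx.1
        rw [abs_of_nonneg (mul_nonneg (by positivity) hx0)]
        rw [show 2/L^2 * x = 2*x/L^2 by ring, div_le_div_iff₀ (by positivity) hL]
        nlinarith [hx.2]
      have hw : |a x - (∫ y in x..L, v y) - lam * ∫ y in x..L, a y|
          ≤ |a x| + (Iv + lam*Ia) := by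
        have t1 := tail_le v hv x hx
        have t2 := tail_le a ca x hx
        have h4 : |a x - (∫ y in x..L, v y) - lam * ∫ y in x..L, a y|
            ≤ |a x - ∫ y in x..L, v y| + |lam * ∫ y in x..L, a y| := abs_sub _ _
        have h5 : |a x - ∫ y in x..L, v y| ≤ |a x| + |∫ y in x..L, v y| := abs_sub _ _
        have h6 : |lam * ∫ y in x..L, a y| = lam * |∫ y in x..L, a y| := by
          rw [abs_mul, abs_of_pos hlam]
        nlinarith [abs_nonneg (∫ y in x..L, a y), hlam.le]
      exact mul_le_mul hψ hw (abs_nonneg _) (by positivity)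
    have h3 : (∫ x in (0:ℝ)..L, (2/L * (|a x| + (Iv + lam*Ia))))
        = 2/L * (Ia + L*(Iv + lam*Ia)) := by
      have : (fun x => 2/L * (|a x| + (Iv + lam*Ia)))
          = fun x => 2/L * |a x| + (2/L * (Iv + lam*Ia)) := by
        funext x; ring
      rw [this, intervalIntegral.integral_add
        (f := fun x => 2/L * |a x|)
        ((continuous_const.mul ca.abs).intervalIntegrable 0 L) intervalIntegrable_const,
        intervalIntegral.integral_const_mul, intervalIntegral.integral_const]
      simp only [smul_eq_mul, sub_zero]
      ring
    linarith
  -- Step 5: conclude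
  have hA : 0 ≤ ∫ x in (0:ℝ)..L, (a x)^2 :=
    intervalIntegral.integral_nonneg hL.le fun x _ => sq_nonneg _
  have hB : 0 ≤ ∫ x in (0:ℝ)..L, (v x)^2 :=
    intervalIntegral.integral_nonneg hL.le fun x _ => sq_nonneg _
  have hIa2 := sq_integral_abs_le L hL a ca
  have hIv2 := sq_integral_abs_le L hL v hv
  rw [← hIadef] at hIa2
  rw [← hIvdef] at hIv2
  set A := ∫ x in (0:ℝ)..L, (a x)^2
  set B := ∫ x in (0:ℝ)..L, (v x)^2
  have hLc : L * |c| ≤ 2*((1+lam*L)*Ia + L*Iv) := by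
    have := mul_le_mul_of_nonneg_left habs hL.le
    have heq : L*(2/L * (Ia + L*(Iv + lam*Ia))) = 2*((1+lam*L)*Ia + L*Iv) := by
      field_simp; ring
    linarith
  have hsq : L^2 * c^2 ≤ 4*((1+lam*L)*Ia + L*Iv)^2 := by
    have h0 : 0 ≤ L * |c| := mul_nonneg hL.le (abs_nonneg c)
    have := mul_self_le_mul_self h0 hLc
    nlinarith [sq_abs c]
  have hm1 : (1+lam*L)^2 * Ia^2 ≤ (1+lam*L)^2 * (L*A) :=
    mul_le_mul_of_nonneg_left hIa2 (sq_nonneg _)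
  have hm2 : L^2 * Iv^2 ≤ L^2 * (L*B) :=
    mul_le_mul_of_nonneg_left hIv2 (sq_nonneg _)
  have h5 : 4*((1+lam*L)*Ia + L*Iv)^2 ≤ L * (8*((1+lam*L)^2 + L^2) * (A+B)) := by
    nlinarith [sq_nonneg ((1+lam*L)*Ia - L*Iv),
      mul_nonneg hL.le (mul_nonneg (sq_nonneg (1+lam*L)) hB),
      mul_nonneg hL.le (mul_nonneg (sq_nonneg L) hA), hm1, hm2]
  have hfin : L * (L * c^2) ≤ L * (8*((1+lam*L)^2 + L^2) * (A+B)) := by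
    have hr : L * (L * c^2) = L^2 * c^2 := by ring
    linarith [hsq, h5]
  exact le_of_mul_le_mul_left hfin hL
lemma slice_smooth {u : ℝ → ℝ → ℝ} (hu : ContDiff ℝ (⊤ : ℕ∞) (uncurry u)) (t : ℝ) :
    ContDiff ℝ ∞ (fun y => u t y) :=
  (hu.comp (contDiff_const.prodMk contDiff_id)).of_le (by simp)

lemma iter2 (f : ℝ → ℝ) : iteratedDeriv 2 f = deriv (deriv f) := by
  rw [iteratedDeriv_succ, iteratedDeriv_one]

lemma iter3 (f : ℝ → ℝ) : iteratedDeriv 3 f = deriv (deriv (deriv f)) := by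
  rw [iteratedDeriv_succ, iter2]

/-- Exponential decay of the cascade target system from the output-feedback backstepping
design: the error state `w̃` solves the homogeneous target system and the observer state `ŵ`
solves the target system forced by `-g(x) w̃_xx(t,L)`.  For every `0 < ε < λ` there is
`C > 0` such that the total energy `∫₀ᴸ ŵ² + ∫₀ᴸ w̃² + ∫₀ᴸ w̃_t²` decays like
`C e^{-2(λ-ε)t}` times its initial value. -/
theorem cascade_target_system_exponential_decay
    (L lam : ℝ) (hL : 0 < L) (hlam : 0 < lam)
    (g : ℝ → ℝ) (hg : Continuous g) :
    ∀ ε : ℝ, 0 < ε → ε < lam → ∃ C > (0:ℝ),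
      ∀ wh wt : ℝ → ℝ → ℝ,
        ContDiff ℝ (⊤ : ℕ∞) (Function.uncurry wh) → ContDiff ℝ (⊤ : ℕ∞) (Function.uncurry wt) →
        (∀ t ≥ (0:ℝ), ∀ x ∈ Set.Icc (0:ℝ) L,
          deriv (fun s => wh s x) t + deriv (fun y => wh t y) x
            + iteratedDeriv 3 (fun y => wh t y) x + lam * wh t x
            = -(g x * iteratedDeriv 2 (fun y => wt t y) L)) →
        (∀ t ≥ (0:ℝ), wh t 0 = 0) →
        (∀ t ≥ (0:ℝ), wh t L = 0) →
        (∀ t ≥ (0:ℝ), deriv (fun y => wh t y) L = 0) →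
        (∀ t ≥ (0:ℝ), ∀ x ∈ Set.Icc (0:ℝ) L,
          deriv (fun s => wt s x) t + deriv (fun y => wt t y) x
            + iteratedDeriv 3 (fun y => wt t y) x + lam * wt t x = 0) →
        (∀ t ≥ (0:ℝ), wt t 0 = 0) →
        (∀ t ≥ (0:ℝ), wt t L = 0) →
        (∀ t ≥ (0:ℝ), deriv (fun y => wt t y) L = 0) →
        ∀ t ≥ (0:ℝ),
          (∫ x in (0:ℝ)..L, (wh t x) ^ 2) + (∫ x in (0:ℝ)..L, (wt t x) ^ 2)
              + (∫ x in (0:ℝ)..L, (deriv (fun s => wt s x) t) ^ 2)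
            ≤ C * Real.exp (-2 * (lam - ε) * t)
              * ((∫ x in (0:ℝ)..L, (wh 0 x) ^ 2) + (∫ x in (0:ℝ)..L, (wt 0 x) ^ 2)
                + (∫ x in (0:ℝ)..L, (deriv (fun s => wt s x) 0) ^ 2)) := by
  intro ε hε hεlam
  set K : ℝ := 8*((1+lam*L)^2 + L^2)/L with hKdef
  have hK : 0 < K := by positivity
  set Gsq : ℝ := ∫ x in (0:ℝ)..L, (g x)^2 with hGdef
  have hGsq : 0 ≤ Gsq :=
    intervalIntegral.integral_nonneg hL.le fun x _ => sq_nonneg _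
  set A : ℝ := Gsq*K/ε^2 + 1 with hAdef
  have hA1 : 1 ≤ A := by
    have h0 : 0 ≤ Gsq*K/ε^2 := by positivity
    rw [hAdef]
    linarith
  refine ⟨A, by linarith, ?_⟩
  intro wh wt hwh hwt pdeh hwh0 hwhL hwhL' pdet hwt0 hwtL hwtL'
  have hv : ContDiff ℝ (⊤ : ℕ∞) (uncurry (pdt wt)) := contDiff_pdt hwt
  set E1 : ℝ → ℝ := fun t => ∫ x in (0:ℝ)..L, (wh t x)^2 with hE1def
  set E2 : ℝ → ℝ := fun t => ∫ x in (0:ℝ)..L, (wt t x)^2 with hE2def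
  set E3 : ℝ → ℝ := fun t => ∫ x in (0:ℝ)..L, (pdt wt t x)^2 with hE3def
  have hE1n : ∀ t, 0 ≤ E1 t := fun t =>
    intervalIntegral.integral_nonneg hL.le fun x _ => sq_nonneg _
  have hE2n : ∀ t, 0 ≤ E2 t := fun t =>
    intervalIntegral.integral_nonneg hL.le fun x _ => sq_nonneg _
  have hE3n : ∀ t, 0 ≤ E3 t := fun t =>
    intervalIntegral.integral_nonneg hL.le fun x _ => sq_nonneg _
  set κ : ℝ := 2*lam - ε with hκdef
  set V : ℝ → ℝ := fun t => E1 t + A * (E2 t + E3 t) with hVdef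
  have hVd : ∀ t, HasDerivAt V
      ((∫ x in (0:ℝ)..L, 2 * wh t x * pdt wh t x)
        + A * ((∫ x in (0:ℝ)..L, 2 * wt t x * pdt wt t x)
          + (∫ x in (0:ℝ)..L, 2 * pdt wt t x * pdt (pdt wt) t x))) t := by
    intro t
    exact ((hasDerivAt_energy hwh L t).add
      (((hasDerivAt_energy hwt L t).add (hasDerivAt_energy hv L t)).const_mul A))
  set W : ℝ → ℝ := fun t => V t * Real.exp (κ * t) with hWdef
  have hWd : ∀ t, HasDerivAt W
      (((∫ x in (0:ℝ)..L, 2 * wh t x * pdt wh t x)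
        + A * ((∫ x in (0:ℝ)..L, 2 * wt t x * pdt wt t x)
          + (∫ x in (0:ℝ)..L, 2 * pdt wt t x * pdt (pdt wt) t x))) * Real.exp (κ * t)
        + V t * (Real.exp (κ * t) * κ)) t := by
    intro t
    have hexp : HasDerivAt (fun t => Real.exp (κ * t)) (Real.exp (κ * t) * κ) t := by
      simpa using ((hasDerivAt_id t).const_mul κ).exp
    exact (hVd t).mul hexp
  -- Key differential inequality on t > 0
  have key : ∀ t : ℝ, 0 < t →
      ((∫ x in (0:ℝ)..L, 2 * wh t x * pdt wh t x)
        + A * ((∫ x in (0:ℝ)..L, 2 * wt t x * pdt wt t x)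
          + (∫ x in (0:ℝ)..L, 2 * pdt wt t x * pdt (pdt wt) t x))) + κ * V t ≤ 0 := by
    intro t ht
    have ht' : (0:ℝ) ≤ t := ht.le
    set c : ℝ := iteratedDeriv 2 (fun y => wt t y) L with hcdef
    -- E2 dissipation
    have hD2 : (∫ x in (0:ℝ)..L, 2 * wt t x * pdt wt t x)
        ≤ -(2*lam) * E2 t := by
      have hsp := spatial_ineq L lam hL (fun y => wt t y) (fun _ => 0)
        (fun x => pdt wt t x) (slice_smooth hwt t) continuous_const
        ((contDiff_pdt hwt).continuous.comp (Continuous.prodMk_right t))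
        ?_ (hwt0 t ht') (hwtL t ht') (hwtL' t ht')
      · calc (∫ x in (0:ℝ)..L, 2 * wt t x * pdt wt t x)
            ≤ -(2*lam) * (∫ x in (0:ℝ)..L, (wt t x)^2)
              + ∫ x in (0:ℝ)..L, 2 * wt t x * (0:ℝ) := hsp
          _ = -(2*lam) * E2 t := by simp [hE2def]
      · intro x hx
        have h := pdet t ht' x hx
        rw [iter3] at h
        have h2 : pdt wt t x + deriv (fun y => wt t y) x
            + deriv (deriv (deriv (fun y => wt t y))) x + lam * wt t x = 0 := h
        linarith
    -- PDE and boundary conditions for v := pdt wt at time t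
    have e3 : pdt (pdx wt) = pdx (pdt wt) := swap hwt
    have e2 : pdt (pdx (pdx wt)) = pdx (pdt (pdx wt)) := swap (contDiff_pdx hwt)
    have e1 : pdt (pdx (pdx (pdx wt))) = pdx (pdt (pdx (pdx wt))) :=
      swap (contDiff_pdx (contDiff_pdx hwt))
    have pdev : ∀ x ∈ Icc (0:ℝ) L,
        pdt (pdt wt) t x = -(pdx (pdt wt) t x)
          - pdx (pdx (pdx (pdt wt))) t x - lam * pdt wt t x := by
      intro x hx
      have hsum : HasDerivAt (fun s => pdt wt s x + pdx wt s x
          + pdx (pdx (pdx wt)) s x + lam * wt s x)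
          (pdt (pdt wt) t x + pdt (pdx wt) t x + pdt (pdx (pdx (pdx wt))) t x
            + lam * pdt wt t x) t := by
        exact (((hasDerivAt_pdt (contDiff_pdt hwt) t x).add
          (hasDerivAt_pdt (contDiff_pdx hwt) t x)).add
          (hasDerivAt_pdt (contDiff_pdx (contDiff_pdx (contDiff_pdx hwt))) t x)).add
          ((hasDerivAt_pdt hwt t x).const_mul lam)
      have heq : (fun s => pdt wt s x + pdx wt s x
          + pdx (pdx (pdx wt)) s x + lam * wt s x) =ᶠ[nhds t] (fun _ => (0:ℝ)) := by
        filter_upwards [Ioi_mem_nhds ht] with s hs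
        have := pdet s (le_of_lt hs) x hx
        rw [iter3] at this
        simpa [pdt, pdx] using this
      have hzero : HasDerivAt (fun _ : ℝ => (0:ℝ))
          (pdt (pdt wt) t x + pdt (pdx wt) t x + pdt (pdx (pdx (pdx wt))) t x
            + lam * pdt wt t x) t := hsum.congr_of_eventuallyEq heq.symm
      have := (hasDerivAt_const t (0:ℝ)).unique hzero
      rw [e3, e1, e2, e3] at this
      linarith
    have hv0 : pdt wt t 0 = 0 := by
      have heq : (fun s => wt s 0) =ᶠ[nhds t] (fun _ => (0:ℝ)) := by
        filter_upwards [Ioi_mem_nhds ht] with s hs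
        exact hwt0 s (le_of_lt hs)
      show deriv (fun s => wt s 0) t = 0
      rw [heq.deriv_eq, deriv_const]
    have hvL : pdt wt t L = 0 := by
      have heq : (fun s => wt s L) =ᶠ[nhds t] (fun _ => (0:ℝ)) := by
        filter_upwards [Ioi_mem_nhds ht] with s hs
        exact hwtL s (le_of_lt hs)
      show deriv (fun s => wt s L) t = 0
      rw [heq.deriv_eq, deriv_const]
    have hvL' : deriv (fun y => pdt wt t y) L = 0 := by
      have h1 : deriv (fun y => pdt wt t y) L = pdx (pdt wt) t L := rfl
      rw [h1, ← e3]
      have heq : (fun s => pdx wt s L) =ᶠ[nhds t] (fun _ => (0:ℝ)) := by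
        filter_upwards [Ioi_mem_nhds ht] with s hs
        exact hwtL' s (le_of_lt hs)
      show deriv (fun s => pdx wt s L) t = 0
      rw [heq.deriv_eq, deriv_const]
    -- E3 dissipation
    have hD3 : (∫ x in (0:ℝ)..L, 2 * pdt wt t x * pdt (pdt wt) t x)
        ≤ -(2*lam) * E3 t := by
      have hsp := spatial_ineq L lam hL (fun y => pdt wt t y) (fun _ => 0)
        (fun x => pdt (pdt wt) t x) (slice_smooth hv t) continuous_const
        ((contDiff_pdt hv).continuous.comp (Continuous.prodMk_right t))
        ?_ hv0 hvL hvL'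
      · calc (∫ x in (0:ℝ)..L, 2 * pdt wt t x * pdt (pdt wt) t x)
            ≤ -(2*lam) * (∫ x in (0:ℝ)..L, (pdt wt t x)^2)
              + ∫ x in (0:ℝ)..L, 2 * pdt wt t x * (0:ℝ) := hsp
          _ = -(2*lam) * E3 t := by simp [hE3def]
      · intro x hx
        have h2 := pdev x hx
        have h3 : pdt (pdt wt) t x = -(deriv (fun y => pdt wt t y) x)
            - deriv (deriv (deriv (fun y => pdt wt t y))) x - lam * pdt wt t x := h2
        linarith
    -- trace bound
    have hc2 : c^2 ≤ K * (E2 t + E3 t) := by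
      have htr := trace_bound L lam hL hlam (fun y => wt t y) (fun x => pdt wt t x)
        (slice_smooth hwt t)
        ((contDiff_pdt hwt).continuous.comp (Continuous.prodMk_right t))
        (hwt0 t ht') (hwtL t ht') (hwtL' t ht') ?_
      · have hceq : c = deriv (deriv (fun y => wt t y)) L := by
          rw [hcdef, iter2]
        rw [hceq]
        rw [hKdef]
        rw [div_mul_eq_mul_div, le_div_iff₀ hL]
        calc deriv (deriv fun y => wt t y) L ^ 2 * L
            = L * (deriv (deriv fun y => wt t y) L)^2 := by ring
          _ ≤ 8*((1+lam*L)^2 + L^2) *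
              ((∫ x in (0:ℝ)..L, (wt t x)^2) + ∫ x in (0:ℝ)..L, (pdt wt t x)^2) := htr
          _ = 8*((1+lam*L)^2 + L^2) * (E2 t + E3 t) := rfl
      · intro x hx
        have h := pdet t ht' x hx
        rw [iter3] at h
        have h2 : pdt wt t x + deriv (fun y => wt t y) x
            + deriv (deriv (deriv (fun y => wt t y))) x + lam * wt t x = 0 := h
        linarith
    -- E1 estimate
    have cw : Continuous (fun x => wh t x) := hwh.continuous.comp (Continuous.prodMk_right t)
    have hD1 : (∫ x in (0:ℝ)..L, 2 * wh t x * pdt wh t x)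
        ≤ -(2*lam) * E1 t + (ε * E1 t + (Gsq/ε) * c^2) := by
      have hsp := spatial_ineq L lam hL (fun y => wh t y) (fun x => -(g x * c))
        (fun x => pdt wh t x) (slice_smooth hwh t) (by fun_prop)
        ((contDiff_pdt hwh).continuous.comp (Continuous.prodMk_right t))
        ?_ (hwh0 t ht') (hwhL t ht') (hwhL' t ht')
      · have hyoung : (∫ x in (0:ℝ)..L, 2 * wh t x * (-(g x * c)))
            ≤ ε * E1 t + (Gsq/ε) * c^2 := by
          have hmono : (∫ x in (0:ℝ)..L, 2 * wh t x * (-(g x * c)))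
              ≤ ∫ x in (0:ℝ)..L, (ε * (wh t x)^2 + (c^2/ε) * (g x)^2) := by
            apply intervalIntegral.integral_mono_on hL.le
              (Continuous.intervalIntegrable (by fun_prop) 0 L)
              (Continuous.intervalIntegrable (by fun_prop) 0 L)
            intro x hx
            have h0 := sq_nonneg (ε * wh t x + c * g x)
            have hrw : (c^2/ε) * (g x)^2 * ε = c^2 * (g x)^2 := by field_simp
            nlinarith [sq_nonneg (ε * wh t x + c * g x)]
          have hsplit : (∫ x in (0:ℝ)..L, (ε * (wh t x)^2 + (c^2/ε) * (g x)^2))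
              = ε * E1 t + (c^2/ε) * Gsq := by
            rw [intervalIntegral.integral_add
              (Continuous.intervalIntegrable (by fun_prop) 0 L)
              (Continuous.intervalIntegrable (by fun_prop) 0 L),
              intervalIntegral.integral_const_mul, intervalIntegral.integral_const_mul]
          have : (c^2/ε) * Gsq = (Gsq/ε) * c^2 := by ring
          linarith
        calc (∫ x in (0:ℝ)..L, 2 * wh t x * pdt wh t x)
            ≤ -(2*lam) * (∫ x in (0:ℝ)..L, (wh t x)^2)
              + ∫ x in (0:ℝ)..L, 2 * wh t x * (-(g x * c)) := hsp
          _ ≤ -(2*lam) * E1 t + (ε * E1 t + (Gsq/ε) * c^2) := by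
              exact add_le_add le_rfl hyoung
      · intro x hx
        have h := pdeh t ht' x hx
        rw [iter3] at h
        have h2 : pdt wh t x + deriv (fun y => wh t y) x
            + deriv (deriv (deriv (fun y => wh t y))) x + lam * wh t x
            = -(g x * c) := h
        linarith
    -- combine
    have hmul : (Gsq/ε) * c^2 ≤ (Gsq/ε) * (K * (E2 t + E3 t)) :=
      mul_le_mul_of_nonneg_left hc2 (by positivity)
    have hA23 : A * ((∫ x in (0:ℝ)..L, 2 * wt t x * pdt wt t x)
        + (∫ x in (0:ℝ)..L, 2 * pdt wt t x * pdt (pdt wt) t x))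
        ≤ A * (-(2*lam) * (E2 t + E3 t)) := by
      apply mul_le_mul_of_nonneg_left _ (by linarith)
      have : -(2*lam) * (E2 t + E3 t) = -(2*lam) * E2 t + -(2*lam) * E3 t := by ring
      linarith
    have hAeqP : ε * (A * (E2 t + E3 t))
        = (Gsq/ε) * (K * (E2 t + E3 t)) + ε * (E2 t + E3 t) := by
      rw [hAdef]
      field_simp
    have hP : 0 ≤ E2 t + E3 t := by linarith [hE2n t, hE3n t]
    have hAP : A * (-(2*lam) * (E2 t + E3 t))
        = -(2*lam) * (A * (E2 t + E3 t)) := by ring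
    rw [hVdef]
    simp only
    rw [hκdef]
    clear_value A K Gsq E1 E2 E3 c
    linarith [hD1, hD2, hD3, hmul, hA23, hAeqP, hP, hE1n t,
      mul_nonneg hε.le hP]
  -- Antitonicity of W on [0, ∞)
  have hWcont : Continuous W :=
    continuous_iff_continuousAt.mpr fun t => (hWd t).continuousAt
  have hmono : AntitoneOn W (Ici (0:ℝ)) := by
    apply antitoneOn_of_deriv_nonpos (convex_Ici 0) hWcont.continuousOn
    · intro t _
      exact (hWd t).differentiableAt.differentiableWithinAt
    · intro t ht
      rw [interior_Ici] at ht
      rw [(hWd t).deriv]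
      have hk := key t ht
      have hexp : 0 < Real.exp (κ * t) := Real.exp_pos _
      nlinarith [hk, hexp]
  -- Conclusion
  intro t ht
  have hW0 : W t ≤ W 0 := hmono self_mem_Ici (mem_Ici.mpr ht) ht
  have hWt : V t * Real.exp (κ * t) ≤ V 0 := by
    have h0 : W 0 = V 0 := by simp [hWdef]
    rw [← h0]; exact hW0
  have hexpp : (0:ℝ) < Real.exp (-(κ * t)) := Real.exp_pos _
  have hVt : V t ≤ V 0 * Real.exp (-(κ * t)) := by
    have h1 := mul_le_mul_of_nonneg_right hWt hexpp.le
    have h2 : V t * Real.exp (κ * t) * Real.exp (-(κ * t)) = V t := by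
      rw [mul_assoc, ← Real.exp_add]
      simp
    rw [h2] at h1
    exact h1
  have hsum0 : 0 ≤ E1 0 + E2 0 + E3 0 := by
    linarith [hE1n 0, hE2n 0, hE3n 0]
  have hV0le : V 0 ≤ A * (E1 0 + E2 0 + E3 0) := by
    rw [hVdef]
    simp only
    nlinarith [hE1n 0, hE2n 0, hE3n 0]
  have hexple : Real.exp (-(κ * t)) ≤ Real.exp (-2*(lam-ε)*t) := by
    apply Real.exp_le_exp.mpr
    rw [hκdef]
    nlinarith [mul_nonneg hε.le ht]
  have hsumle : E1 t + E2 t + E3 t ≤ V t := by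
    rw [hVdef]
    simp only
    nlinarith [hE2n t, hE3n t]
  have chain : E1 t + E2 t + E3 t ≤ A * Real.exp (-2*(lam-ε)*t) * (E1 0 + E2 0 + E3 0) := by
    have b1 : V 0 * Real.exp (-(κ * t)) ≤ (A * (E1 0 + E2 0 + E3 0)) * Real.exp (-(κ * t)) :=
      mul_le_mul_of_nonneg_right hV0le hexpp.le
    have b2 : (A * (E1 0 + E2 0 + E3 0)) * Real.exp (-(κ * t))
        ≤ (A * (E1 0 + E2 0 + E3 0)) * Real.exp (-2*(lam-ε)*t) :=
      mul_le_mul_of_nonneg_left hexple (by nlinarith)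
    calc E1 t + E2 t + E3 t ≤ V t := hsumle
      _ ≤ V 0 * Real.exp (-(κ * t)) := hVt
      _ ≤ (A * (E1 0 + E2 0 + E3 0)) * Real.exp (-(κ * t)) := b1
      _ ≤ (A * (E1 0 + E2 0 + E3 0)) * Real.exp (-2*(lam-ε)*t) := b2
      _ = A * Real.exp (-2*(lam-ε)*t) * (E1 0 + E2 0 + E3 0) := by ring
  exact chain
end

section
/- Let L > 0 and let k : ℝ × ℝ → ℝ be continuous on [0,L] × [0,L]. Then the map Π defined by (Π f)(x) = f(x) − ∫ₓᴸ k(x,y) f(y) dy is a bounded linear operator from L²(0,L) to L²(0,L), it is bijective, and its inverse is also a bounded linear operator. -/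
/-!
Write `Π = 1 - V` with `V f (x) = ∫ₓᴸ k(x,y) f(y) dy`. Clamping both arguments of `k` to
`[0,L]` extends it to a bounded continuous kernel on the plane without changing `V`, so `V`
is a bounded operator on `L²(0,L)`. Iterating the estimate `|V f (x)| ≤ M ∫ₓᴸ |f|` gives
`|Vⁿ⁺¹ f (x)| ≤ Mⁿ⁺¹ ‖f‖₁ (L - x)ⁿ / n!`, hence `‖Vⁿ⁺¹‖ ≤ (ML)ⁿ⁺¹ / n! < 1` for large `n`.
Then `1 - Vⁿ⁺¹ = (1 - V)(1 + V + ⋯ + Vⁿ)` is invertible by the Neumann series, and as the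
two factors commute, `1 - V` is invertible as well.
-/

open MeasureTheory Set Filter Function Topology
open scoped Nat

section NormedRing

variable {R : Type*} [NormedRing R] [HasSummableGeomSeries R] {a : R}

theorem isUnit_one_sub_of_norm_pow_lt_one {n : ℕ} (h : ‖a ^ n‖ < 1) : IsUnit (1 - a) := by
  have hcomm : Commute (1 - a) (∑ i ∈ Finset.range n, a ^ i) :=
    .sum_right _ _ _ fun i _ => ((Commute.one_left a).sub_left (.refl a)).pow_right i
  have hunit := isUnit_one_sub_of_norm_lt_one h
  rw [← mul_neg_geom_sum] at hunit
  exact (hcomm.isUnit_mul_iff.mp hunit).1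

theorem isUnit_one_sub_of_norm_pow_succ_le {C : ℝ}
    (h : ∀ n : ℕ, ‖a ^ (n + 1)‖ ≤ C ^ (n + 1) / n !) : IsUnit (1 - a) := by
  have hlim : Tendsto (fun n : ℕ => C ^ (n + 1) / n !) atTop (𝓝 0) := by
    simpa [pow_succ, mul_div_right_comm] using
      (FloorSemiring.tendsto_pow_div_factorial_atTop C).mul_const C
  obtain ⟨n, hn⟩ := (hlim.eventually (gt_mem_nhds one_pos)).exists
  exact isUnit_one_sub_of_norm_pow_lt_one ((h n).trans_lt hn)

end NormedRing

section LpTwo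

variable {α E : Type*} [MeasurableSpace α] [NormedAddCommGroup E] {μ : Measure α}
  [IsFiniteMeasure μ]

theorem MeasureTheory.Lp.integral_norm_le_sqrt_measureReal_univ_mul_norm (f : Lp E 2 μ) :
    ∫ x, ‖f x‖ ∂μ ≤ √(μ.real univ) * ‖f‖ := by
  have hf := Lp.aestronglyMeasurable f
  have h := eLpNorm_le_eLpNorm_mul_rpow_measure_univ (p := 1) (q := 2) one_le_two hf
  norm_num at h
  rw [integral_norm_eq_lintegral_enorm hf, ← eLpNorm_one_eq_lintegral_enorm, Lp.norm_def,
    Real.sqrt_eq_rpow, measureReal_def, mul_comm, ENNReal.toReal_rpow, ← ENNReal.toReal_mul]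
  exact ENNReal.toReal_mono (ENNReal.mul_ne_top (Lp.eLpNorm_ne_top f) (by finiteness)) h

theorem MeasureTheory.Lp.norm_le_sqrt_measureReal_univ_mul_of_ae_bound {f : Lp E 2 μ} {C : ℝ}
    (hC : 0 ≤ C) (hfC : ∀ᵐ x ∂μ, ‖f x‖ ≤ C) : ‖f‖ ≤ √(μ.real univ) * C := by
  refine (Lp.norm_le_of_ae_bound hC hfC).trans_eq ?_
  rw [Real.sqrt_eq_rpow, measureUnivNNReal, ENNReal.coe_toNNReal_eq_toReal, ← measureReal_def]
  norm_num

end LpTwo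

theorem measureReal_restrict_Ioo_univ {a b : ℝ} (hab : a ≤ b) :
    (volume.restrict (Ioo a b)).real univ = b - a := by
  rw [measureReal_restrict_apply_univ, Real.volume_real_Ioo_of_le hab]

noncomputable def volterraIntegral (K : ℝ → ℝ → ℝ) (L : ℝ) (f : ℝ → ℝ) (x : ℝ) : ℝ :=
  ∫ y in Ioo x L, K x y * f y

section VolterraIntegral

variable {K : ℝ → ℝ → ℝ} {L M : ℝ} {f : ℝ → ℝ} {x : ℝ}

theorem volterraIntegral_congr_ae {g : ℝ → ℝ} (h : f =ᵐ[volume.restrict (Ioo 0 L)] g)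
    (hx : 0 ≤ x) : volterraIntegral K L f x = volterraIntegral K L g x :=
  integral_congr_ae <| (ae_restrict_of_ae_restrict_of_subset (Ioo_subset_Ioo_left hx) h).mono
    fun y hy => by simp only [hy]

theorem volterraIntegral_eq_intervalIntegral (hx : x ≤ L) :
    volterraIntegral K L f x = ∫ y in x..L, K x y * f y := by
  rw [volterraIntegral, intervalIntegral.integral_of_le hx, integral_Ioc_eq_integral_Ioo]

theorem stronglyMeasurable_volterraIntegral (hK : Continuous (uncurry K))
    (hf : StronglyMeasurable f) : StronglyMeasurable (volterraIntegral K L f) := by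
  have hset : MeasurableSet {p : ℝ × ℝ | p.2 ∈ Ioo p.1 L} :=
    (measurableSet_lt measurable_fst measurable_snd).inter
      (measurableSet_lt measurable_snd measurable_const)
  have hint : StronglyMeasurable
      (uncurry fun x y => (Ioo x L).indicator (fun y => K x y * f y) y) :=
    (hK.stronglyMeasurable.mul (hf.comp_measurable measurable_snd)).indicator hset
  convert hint.integral_prod_right (ν := volume) using 2 with x
  exact (integral_indicator measurableSet_Ioo).symm

theorem aestronglyMeasurable_volterraIntegral (hK : Continuous (uncurry K))
    (hf : AEStronglyMeasurable f (volume.restrict (Ioo 0 L))) :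
    AEStronglyMeasurable (volterraIntegral K L f) (volume.restrict (Ioo 0 L)) := by
  refine ((stronglyMeasurable_volterraIntegral (L := L) hK
    hf.stronglyMeasurable_mk).aestronglyMeasurable).congr ?_
  filter_upwards [ae_restrict_mem measurableSet_Ioo] with x hx
  exact volterraIntegral_congr_ae hf.ae_eq_mk.symm hx.1.le

theorem integrableOn_kernel_mul (hK : Continuous (uncurry K)) (hM : ∀ x y, |K x y| ≤ M)
    (hf : IntegrableOn f (Ioo 0 L)) (hx : 0 ≤ x) :
    IntegrableOn (fun y => K x y * f y) (Ioo x L) :=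
  (hf.mono_set (Ioo_subset_Ioo_left hx)).bdd_mul
    (hK.comp (Continuous.prodMk_right x)).aestronglyMeasurable
    (Eventually.of_forall fun y => hM x y)

theorem volterraIntegral_add (hK : Continuous (uncurry K)) (hM : ∀ x y, |K x y| ≤ M)
    {g : ℝ → ℝ} (hf : IntegrableOn f (Ioo 0 L)) (hg : IntegrableOn g (Ioo 0 L)) (hx : 0 ≤ x) :
    volterraIntegral K L (f + g) x = volterraIntegral K L f x + volterraIntegral K L g x := by
  simp only [volterraIntegral, Pi.add_apply, mul_add]
  exact integral_add (integrableOn_kernel_mul hK hM hf hx)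
    (integrableOn_kernel_mul hK hM hg hx)

theorem volterraIntegral_const_smul (c : ℝ) :
    volterraIntegral K L (c • f) x = c * volterraIntegral K L f x := by
  simp only [volterraIntegral, Pi.smul_apply, smul_eq_mul, mul_left_comm _ c, integral_const_mul]

theorem abs_volterraIntegral_le (hM : ∀ x y, |K x y| ≤ M) (hf : IntegrableOn f (Ioo 0 L))
    (hx : 0 ≤ x) : |volterraIntegral K L f x| ≤ M * ∫ y in Ioo x L, |f y| := by
  rw [← integral_const_mul, ← Real.norm_eq_abs]
  refine norm_integral_le_of_norm_le ((hf.mono_set (Ioo_subset_Ioo_left hx)).abs.const_mul M)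
    (Eventually.of_forall fun y => ?_)
  rw [norm_mul, Real.norm_eq_abs, Real.norm_eq_abs]
  exact mul_le_mul_of_nonneg_right (hM x y) (abs_nonneg _)

theorem abs_volterraIntegral_le_integral (hM : ∀ x y, |K x y| ≤ M)
    (hf : IntegrableOn f (Ioo 0 L)) (hx : 0 ≤ x) :
    |volterraIntegral K L f x| ≤ M * ∫ y in Ioo 0 L, |f y| := by
  refine (abs_volterraIntegral_le hM hf hx).trans
    (mul_le_mul_of_nonneg_left ?_ ((abs_nonneg _).trans (hM 0 0)))
  exact setIntegral_mono_set hf.abs (Eventually.of_forall fun y => abs_nonneg _)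
    (Ioo_subset_Ioo_left hx).eventuallyLE

theorem integral_Ioo_sub_pow (n : ℕ) (hx : x ≤ L) :
    ∫ y in Ioo x L, (L - y) ^ n = (L - x) ^ (n + 1) / (n + 1) := by
  rw [← integral_Ioc_eq_integral_Ioo, ← intervalIntegral.integral_of_le hx,
    intervalIntegral.integral_comp_sub_left (fun y => y ^ n) L, sub_self, integral_pow]
  simp

theorem abs_volterraIntegral_le_of_ae_abs_le_pow (hM : ∀ x y, |K x y| ≤ M)
    (hf : IntegrableOn f (Ioo 0 L)) {C : ℝ} {n : ℕ}
    (hfC : ∀ᵐ y ∂volume.restrict (Ioo 0 L), |f y| ≤ C * (L - y) ^ n) (hx : x ∈ Icc 0 L) :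
    |volterraIntegral K L f x| ≤ M * C / (n + 1) * (L - x) ^ (n + 1) := by
  have hsub : Ioo x L ⊆ Ioo 0 L := Ioo_subset_Ioo_left hx.1
  have hpow : IntegrableOn (fun y => C * (L - y) ^ n) (Ioo x L) :=
    (continuous_const.mul ((continuous_const.sub continuous_id).pow n)).integrableOn_Icc.mono_set
      Ioo_subset_Icc_self
  calc |volterraIntegral K L f x| ≤ M * ∫ y in Ioo x L, |f y| :=
        abs_volterraIntegral_le hM hf hx.1
    _ ≤ M * ∫ y in Ioo x L, C * (L - y) ^ n :=
        mul_le_mul_of_nonneg_left (integral_mono_ae (hf.mono_set hsub).abs hpow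
          (ae_restrict_of_ae_restrict_of_subset hsub hfC)) ((abs_nonneg _).trans (hM 0 0))
    _ = M * C / (n + 1) * (L - x) ^ (n + 1) := by
        rw [integral_const_mul, integral_Ioo_sub_pow n hx.2]; ring

end VolterraIntegral

local notation "L²(0," L ")" => Lp ℝ 2 (volume.restrict (Ioo (0:ℝ) L))

section VolterraOperator

variable {K : ℝ → ℝ → ℝ} {L M : ℝ}

theorem integral_Ioo_abs_le_sqrt_mul_norm (hL : 0 ≤ L) (f : L²(0,L)) :
    ∫ y in Ioo 0 L, |f y| ≤ √L * ‖f‖ := by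
  simpa only [Real.norm_eq_abs, measureReal_restrict_Ioo_univ hL, sub_zero] using
    Lp.integral_norm_le_sqrt_measureReal_univ_mul_norm f

theorem memLp_volterraIntegral (hK : Continuous (uncurry K)) (hM : ∀ x y, |K x y| ≤ M)
    (f : L²(0,L)) : MemLp (volterraIntegral K L f) 2 (volume.restrict (Ioo 0 L)) := by
  refine .of_bound (aestronglyMeasurable_volterraIntegral hK (Lp.aestronglyMeasurable f))
    (M * ∫ y in Ioo 0 L, |f y|) ?_
  filter_upwards [ae_restrict_mem measurableSet_Ioo] with x hx
  exact abs_volterraIntegral_le_integral hM ((Lp.memLp f).integrable one_le_two) hx.1.le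

noncomputable def volterraOperator (hL : 0 ≤ L) (hK : Continuous (uncurry K))
    (hM : ∀ x y, |K x y| ≤ M) : L²(0,L) →L[ℝ] L²(0,L) :=
  LinearMap.mkContinuous
    { toFun f := (memLp_volterraIntegral hK hM f).toLp _
      map_add' f g := by
        rw [← MemLp.toLp_add]
        refine MemLp.toLp_congr _ _ ?_
        filter_upwards [ae_restrict_mem measurableSet_Ioo] with x hx
        rw [volterraIntegral_congr_ae (Lp.coeFn_add f g) hx.1.le]
        exact volterraIntegral_add hK hM ((Lp.memLp f).integrable one_le_two)
          ((Lp.memLp g).integrable one_le_two) hx.1.le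
      map_smul' c f := by
        rw [RingHom.id_apply, ← MemLp.toLp_const_smul]
        refine MemLp.toLp_congr _ _ ?_
        filter_upwards [ae_restrict_mem measurableSet_Ioo] with x hx
        rw [volterraIntegral_congr_ae (Lp.coeFn_smul c f) hx.1.le]
        exact volterraIntegral_const_smul c }
    (M * L) fun f => by
      have hM0 : 0 ≤ M := (abs_nonneg _).trans (hM 0 0)
      have hbound : ∀ᵐ x ∂volume.restrict (Ioo 0 L),
          ‖((memLp_volterraIntegral hK hM f).toLp _ : ℝ → ℝ) x‖ ≤
            M * ∫ y in Ioo 0 L, |f y| := by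
        filter_upwards [(memLp_volterraIntegral hK hM f).coeFn_toLp,
          ae_restrict_mem measurableSet_Ioo] with x hx hx0
        rw [hx, Real.norm_eq_abs]
        exact abs_volterraIntegral_le_integral hM ((Lp.memLp f).integrable one_le_two) hx0.1.le
      calc _ ≤ √L * (M * ∫ y in Ioo 0 L, |f y|) := by
            have := Lp.norm_le_sqrt_measureReal_univ_mul_of_ae_bound (by positivity) hbound
            rwa [measureReal_restrict_Ioo_univ hL, sub_zero] at this
        _ ≤ √L * (M * (√L * ‖f‖)) := by gcongr; exact integral_Ioo_abs_le_sqrt_mul_norm hL f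
        _ = M * L * ‖f‖ := by linear_combination M * ‖f‖ * Real.mul_self_sqrt hL

theorem volterraOperator_apply (hL : 0 ≤ L) (hK : Continuous (uncurry K))
    (hM : ∀ x y, |K x y| ≤ M) (f : L²(0,L)) :
    volterraOperator hL hK hM f =ᵐ[volume.restrict (Ioo 0 L)] volterraIntegral K L f :=
  (memLp_volterraIntegral hK hM f).coeFn_toLp

end VolterraOperator

section VolterraOperatorPow

variable {K : ℝ → ℝ → ℝ} {L M : ℝ} (hL : 0 ≤ L) (hK : Continuous (uncurry K))
  (hM : ∀ x y, |K x y| ≤ M)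

theorem ae_abs_volterraOperator_pow_apply_le (n : ℕ) (f : L²(0,L)) :
    ∀ᵐ x ∂volume.restrict (Ioo 0 L), |(volterraOperator hL hK hM ^ (n + 1)) f x| ≤
      M ^ (n + 1) * (∫ y in Ioo 0 L, |f y|) / n ! * (L - x) ^ n := by
  induction n with
  | zero =>
    filter_upwards [volterraOperator_apply hL hK hM f, ae_restrict_mem measurableSet_Ioo]
      with x hx hx0
    rw [pow_one, hx]
    simpa using
      abs_volterraIntegral_le_integral hM ((Lp.memLp f).integrable one_le_two) hx0.1.le
  | succ n ih =>
    set T := volterraOperator hL hK hM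
    filter_upwards [volterraOperator_apply hL hK hM ((T ^ (n + 1)) f),
      ae_restrict_mem measurableSet_Ioo] with x hx hx0
    rw [pow_succ', mul_apply_eq_comp, hx]
    refine (abs_volterraIntegral_le_of_ae_abs_le_pow hM
      ((Lp.memLp _).integrable one_le_two) ih (Ioo_subset_Icc_self hx0)).trans_eq ?_
    rw [Nat.factorial_succ]
    push_cast
    field_simp
    ring

theorem norm_volterraOperator_pow_le (n : ℕ) :
    ‖volterraOperator hL hK hM ^ (n + 1)‖ ≤ (M * L) ^ (n + 1) / n ! := by
  have hM0 : 0 ≤ M := (abs_nonneg _).trans (hM 0 0)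
  refine ContinuousLinearMap.opNorm_le_bound _ (by positivity) fun f => ?_
  set I := ∫ y in Ioo 0 L, |f y|
  have hbound : ∀ᵐ x ∂volume.restrict (Ioo 0 L),
      ‖(volterraOperator hL hK hM ^ (n + 1)) f x‖ ≤ M ^ (n + 1) * I / n ! * L ^ n := by
    filter_upwards [ae_abs_volterraOperator_pow_apply_le hL hK hM n f,
      ae_restrict_mem measurableSet_Ioo] with x hx hx0
    refine hx.trans (mul_le_mul_of_nonneg_left ?_ (by positivity))
    exact pow_le_pow_left₀ (by linarith [hx0.2]) (by linarith [hx0.1]) n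
  have := Lp.norm_le_sqrt_measureReal_univ_mul_of_ae_bound (by positivity) hbound
  rw [measureReal_restrict_Ioo_univ hL, sub_zero] at this
  calc _ ≤ √L * (M ^ (n + 1) * I / n ! * L ^ n) := this
    _ ≤ √L * (M ^ (n + 1) * (√L * ‖f‖) / n ! * L ^ n) := by
        gcongr; exact integral_Ioo_abs_le_sqrt_mul_norm hL f
    _ = (M * L) ^ (n + 1) / n ! * ‖f‖ := by
        rw [mul_pow, pow_succ L]
        linear_combination M ^ (n + 1) * L ^ n / n ! * ‖f‖ * Real.mul_self_sqrt hL

end VolterraOperatorPow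

/-- The Volterra transformation of the second kind `Π f (x) = f(x) - ∫ₓᴸ k(x,y) f(y) dy`
with continuous upper-triangular kernel `k` is a bounded linear operator on `L²(0,L)`, it is
bijective, and its inverse is also bounded; i.e. it induces a continuous linear equivalence
of `L²(0,L)` with itself. -/
theorem volterra_transformation_invertible
    (L : ℝ) (hL : 0 < L) (k : ℝ → ℝ → ℝ)
    (hk : ContinuousOn (Function.uncurry k) (Set.Icc (0:ℝ) L ×ˢ Set.Icc (0:ℝ) L)) :
    ∃ Pi : Lp ℝ 2 (volume.restrict (Set.Ioo (0:ℝ) L))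
        ≃L[ℝ] Lp ℝ 2 (volume.restrict (Set.Ioo (0:ℝ) L)),
      ∀ f : Lp ℝ 2 (volume.restrict (Set.Ioo (0:ℝ) L)),
        (Pi f : ℝ → ℝ)
          =ᵐ[volume.restrict (Set.Ioo (0:ℝ) L)]
            fun x => f x - ∫ y in x..L, k x y * f y := by
  set P : ℝ → ℝ := fun t => projIcc 0 L hL.le t
  set K : ℝ → ℝ → ℝ := fun x y => k (P x) (P y)
  have hK : Continuous (uncurry K) :=
    hk.comp_continuous (f := fun p : ℝ × ℝ => (P p.1, P p.2)) (by fun_prop)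
      fun p => ⟨(projIcc 0 L hL.le _).2, (projIcc 0 L hL.le _).2⟩
  obtain ⟨M, hkM⟩ := (isCompact_Icc.prod isCompact_Icc).exists_bound_of_continuousOn hk
  have hM : ∀ x y, |K x y| ≤ M := fun x y =>
    hkM (P x, P y) ⟨(projIcc 0 L hL.le x).2, (projIcc 0 L hL.le y).2⟩
  set T := volterraOperator hL.le hK hM
  have hT : IsUnit (1 - T) :=
    isUnit_one_sub_of_norm_pow_succ_le (norm_volterraOperator_pow_le hL.le hK hM)
  refine ⟨.ofUnit hT.unit, fun f => ?_⟩
  filter_upwards [Lp.coeFn_sub f (T f), volterraOperator_apply hL.le hK hM f,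
    ae_restrict_mem measurableSet_Ioo] with x hsub hTf hx
  change (f - T f : L²(0,L)) x = _
  rw [hsub, Pi.sub_apply, hTf, volterraIntegral_eq_intervalIntegral hx.2.le]
  congr 1
  refine intervalIntegral.integral_congr fun y hy => ?_
  rw [uIcc_of_le hx.2.le] at hy
  simp only [K, P, projIcc_of_mem _ (Ioo_subset_Icc_self hx),
    projIcc_of_mem _ ⟨hx.1.le.trans hy.1, hy.2⟩]
end
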